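/- arXiv:1912.11750 — 11 statements merged into one kernel-verified Lean document; each statement's English description precedes it below -/
import Mathlib

section
/- Let a, b, c be nonzero squarefree pairwise coprime integers. If ax² + by² + cz² = 0 has a nonzero integer solution, then -ab is a quadratic residue modulo c, i.e., there exists d with d² ≡ -ab (mod c). -/
/-!
Descend to a solution `(x, y, z)` with `y` prime to `c`: a common prime factor `p` of `y` and `c`
does not divide `a`, so it divides `x`; then `p² ∣ c z²` while `p² ∤ c`, so `p` divides `z` as
well and the solution can be divided by `p`. For such a solution `c ∣ a x² + b y²` gives
`(a x y⁻¹)² ≡ a² x² y⁻² ≡ -a b (mod c)`.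
-/

theorem prime_dvd_and_dvd_of_sum_sq_eq_zero {p a b c x y z : ℤ} (hp : Prime p)
    (hsc : Squarefree c) (hpc : p ∣ c) (hpa : ¬p ∣ a)
    (h : a * x ^ 2 + b * y ^ 2 + c * z ^ 2 = 0) (hpy : p ∣ y) : p ∣ x ∧ p ∣ z := by
  have hpx : p ∣ x := by
    have : p ∣ a * x ^ 2 := by
      rw [show a * x ^ 2 = -(b * y ^ 2 + c * z ^ 2) by linear_combination h]
      exact (((hpy.pow two_ne_zero).mul_left b).add (hpc.mul_right _)).neg_right
    exact hp.dvd_of_dvd_pow ((hp.dvd_or_dvd this).resolve_left hpa)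
  obtain ⟨x', rfl⟩ := hpx
  obtain ⟨y', rfl⟩ := hpy
  obtain ⟨c', rfl⟩ := hpc
  have hpc' : ¬p ∣ c' := fun ⟨c'', hc''⟩ ↦
    hp.not_isUnit (hsc p ⟨c'', by rw [hc'']; ring⟩)
  have hcz : c' * z ^ 2 = p * -(a * x' ^ 2 + b * y' ^ 2) :=
    mul_left_cancel₀ hp.ne_zero (by linear_combination h)
  exact ⟨dvd_mul_right p x',
    hp.dvd_of_dvd_pow ((hp.dvd_or_dvd ⟨_, hcz⟩).resolve_left hpc')⟩

theorem natAbs_add_lt_natAbs_mul_add {p x y z : ℤ} (hp : 1 < p.natAbs)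
    (hne : (x, y, z) ≠ (0, 0, 0)) :
    x.natAbs + y.natAbs + z.natAbs < (p * x).natAbs + (p * y).natAbs + (p * z).natAbs := by
  have hpos : 0 < x.natAbs + y.natAbs + z.natAbs := by
    by_contra! H
    exact hne (by simp_all)
  simp only [Int.natAbs_mul, ← mul_add]
  exact lt_mul_left hpos hp

theorem exists_sum_sq_eq_zero_isCoprime {a b c : ℤ} (hsc : Squarefree c) (hca : IsCoprime c a)
    (x y z : ℤ) (hne : (x, y, z) ≠ (0, 0, 0)) (h : a * x ^ 2 + b * y ^ 2 + c * z ^ 2 = 0) :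
    ∃ x y z : ℤ, IsCoprime y c ∧ a * x ^ 2 + b * y ^ 2 + c * z ^ 2 = 0 := by
  by_cases hyc : IsCoprime y c
  · exact ⟨x, y, z, hyc, h⟩
  obtain ⟨p, hp, hpy, hpc⟩ : ∃ p, Prime p ∧ p ∣ y ∧ p ∣ c := by
    by_contra! H
    exact hyc (isCoprime_of_prime_dvd (fun h ↦ hsc.ne_zero h.2) H)
  have hpa : ¬p ∣ a := fun hpa ↦ hp.not_isUnit (hca.isUnit_of_dvd' hpc hpa)
  obtain ⟨⟨x', hx⟩, ⟨z', hz⟩⟩ := prime_dvd_and_dvd_of_sum_sq_eq_zero hp hsc hpc hpa h hpy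
  obtain ⟨y', hy⟩ := hpy
  subst hx hy hz
  have hne' : (x', y', z') ≠ (0, 0, 0) := by
    rintro ⟨⟩
    simp at hne
  have h' : a * x' ^ 2 + b * y' ^ 2 + c * z' ^ 2 = 0 :=
    (mul_eq_zero.mp (by linear_combination h : p ^ 2 * _ = 0)).resolve_left
      (pow_ne_zero 2 hp.ne_zero)
  have hlt := natAbs_add_lt_natAbs_mul_add (Int.prime_iff_natAbs_prime.mp hp).one_lt hne'
  exact exists_sum_sq_eq_zero_isCoprime hsc hca x' y' z' hne' h'
termination_by x.natAbs + y.natAbs + z.natAbs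
decreasing_by
  subst_vars
  exact hlt

theorem exists_sq_modEq_neg_mul_of_isCoprime {a b c x y : ℤ} (hyc : IsCoprime y c)
    (h : c ∣ a * x ^ 2 + b * y ^ 2) : ∃ d : ℤ, d ^ 2 ≡ -(a * b) [ZMOD c] := by
  obtain ⟨u, v, huv⟩ := hyc
  obtain ⟨k, hk⟩ := h
  refine ⟨a * x * u, (Int.modEq_iff_dvd.mpr ⟨a * u ^ 2 * k + a * b * v * (u * y + 1), ?_⟩).symm⟩
  linear_combination a * u ^ 2 * hk - a * b * (u * y + 1) * huv

theorem stmt_1_general (a b c : ℤ)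
    (hsc : Squarefree c)
    (hca : IsCoprime c a)
    (hsol : ∃ x y z : ℤ, (x, y, z) ≠ (0, 0, 0) ∧ a * x ^ 2 + b * y ^ 2 + c * z ^ 2 = 0) :
    ∃ d : ℤ, d ^ 2 ≡ -(a * b) [ZMOD c] := by
  obtain ⟨x, y, z, hne, h⟩ := hsol
  obtain ⟨x, y, z, hyc, h⟩ := exists_sum_sq_eq_zero_isCoprime hsc hca x y z hne h
  exact exists_sq_modEq_neg_mul_of_isCoprime (x := x) hyc ⟨-z ^ 2, by linear_combination h⟩

theorem stmt_1 (a b c : ℤ) (ha : a ≠ 0) (hb : b ≠ 0) (hc : c ≠ 0)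
    (hsa : Squarefree a) (hsb : Squarefree b) (hsc : Squarefree c)
    (hab : IsCoprime a b) (hbc : IsCoprime b c) (hca : IsCoprime c a)
    (hsol : ∃ x y z : ℤ, (x, y, z) ≠ (0, 0, 0) ∧ a * x ^ 2 + b * y ^ 2 + c * z ^ 2 = 0) :
    ∃ d : ℤ, d ^ 2 ≡ -(a * b) [ZMOD c] :=
  stmt_1_general a b c hsc hca hsol
end

section
/- Legendre's theorem: Let a, b, c be nonzero squarefree pairwise coprime integers. The equation ax² + by² + cz² = 0 has a nonzero integer solution if and only if (A) a, b, c do not all have the same sign, and (B) -bc, -ca, -ab are quadratic residues modulo a, b, c respectively. -/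
/-!
Necessity: after dividing out a common factor, a solution is primitive; then `z` is prime to `a`
(a common prime `p` would divide `y`, and then `x` since `a` is squarefree), and `b y z⁻¹` is a
square root of `-b c` modulo `a`.

Sufficiency: up to rotating and negating, `a, b > 0 > c`.
The residue conditions make `a x² + b y² + c z²` a product of linear forms modulo each of `a`, `b`,
`c`, so by pigeonhole some `(u, v, w) ≠ 0` with `u² ≤ |b c|`, `v² ≤ |c a|`, `w² ≤ |a b|` has form
value divisible by `a b c`. That value is `k a b c` with `-2 ≤ k ≤ 1`; `k = 0` is a solution,
`k = -1` yields one by a composition identity, and `k ∈ {-2, 1}` force `a = b = 1`, where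
`-c` is a sum of two squares.
-/

def HasNontrivialZero (a b c : ℤ) : Prop :=
  ∃ x y z : ℤ, (x, y, z) ≠ (0, 0, 0) ∧ a * x ^ 2 + b * y ^ 2 + c * z ^ 2 = 0

def LegendreResidueConditions (a b c : ℤ) : Prop :=
  (∃ d : ℤ, d ^ 2 ≡ -(b * c) [ZMOD a]) ∧ (∃ e : ℤ, e ^ 2 ≡ -(c * a) [ZMOD b]) ∧
    (∃ f : ℤ, f ^ 2 ≡ -(a * b) [ZMOD c])

theorem Squarefree.neg {R : Type*} [Monoid R] [HasDistribNeg R] {x : R} (h : Squarefree x) :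
    Squarefree (-x) :=
  fun y hy => h y (dvd_neg.1 hy)

theorem eq_one_of_squarefree_of_mul_eq_sq {a b w : ℤ} (ha : 0 < a) (hsa : Squarefree a)
    (hab : IsCoprime a b) (h : a * b = w ^ 2) : a = 1 := by
  obtain ⟨a₀, rfl | rfl⟩ := Int.sq_of_isCoprime hab h
  · exact Int.isUnit_sq (hsa a₀ (by rw [sq]))
  · nlinarith [sq_nonneg a₀]


theorem mul_pos_and_mul_neg_of_not_same_sign {R : Type*} [Ring R] [LinearOrder R]
    [IsStrictOrderedRing R] {a b c : R} (ha : a ≠ 0) (hb : b ≠ 0) (hc : c ≠ 0)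
    (h : ¬((0 < a ∧ 0 < b ∧ 0 < c) ∨ (a < 0 ∧ b < 0 ∧ c < 0))) :
    (0 < a * b ∧ a * c < 0) ∨ (0 < b * c ∧ b * a < 0) ∨ (0 < c * a ∧ c * b < 0) := by
  rcases ha.lt_or_gt with ha | ha <;> rcases hb.lt_or_gt with hb | hb <;>
    rcases hc.lt_or_gt with hc | hc <;>
    simp [mul_pos_iff, mul_neg_iff, ha, hb, hc, ha.not_gt, hb.not_gt, hc.not_gt] at h ⊢

theorem exists_primitive_of_ne_zero {α : Type*} [CommMonoidWithZero α] [GCDMonoid α]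
    {x y z : α} (h : (x, y, z) ≠ (0, 0, 0)) :
    ∃ g x' y' z' : α, g ≠ 0 ∧ x = g * x' ∧ y = g * y' ∧ z = g * z' ∧
      ∀ p, p ∣ x' → p ∣ y' → p ∣ z' → IsUnit p := by
  set g := gcd x (gcd y z)
  have hg : g ≠ 0 := by simpa [g, gcd_eq_zero_iff] using h
  obtain ⟨x', hx⟩ : g ∣ x := gcd_dvd_left _ _
  obtain ⟨y', hy⟩ : g ∣ y := (gcd_dvd_right _ _).trans (gcd_dvd_left _ _)
  obtain ⟨z', hz⟩ : g ∣ z := (gcd_dvd_right _ _).trans (gcd_dvd_right _ _)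
  refine ⟨g, x', y', z', hg, hx, hy, hz, fun p hpx hpy hpz => ?_⟩
  have hgp : g * p ∣ g * 1 := by
    rw [mul_one]
    refine dvd_gcd ?_ (dvd_gcd ?_ ?_)
    · rw [hx]; exact mul_dvd_mul_left g hpx
    · rw [hy]; exact mul_dvd_mul_left g hpy
    · rw [hz]; exact mul_dvd_mul_left g hpz
  exact isUnit_of_dvd_one ((mul_dvd_mul_iff_left hg).1 hgp)

theorem exists_ne_zero_natAbs_lt_map_eq_zero {M : Type*} [AddCommGroup M] [Fintype M]
    (f : ℤ × ℤ × ℤ →+ M) {n₁ n₂ n₃ : ℕ} (h : Fintype.card M < n₁ * n₂ * n₃) :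
    ∃ u v w : ℤ, (u, v, w) ≠ (0, 0, 0) ∧ u.natAbs < n₁ ∧ v.natAbs < n₂ ∧ w.natAbs < n₃ ∧
      f (u, v, w) = 0 := by
  let box : Finset (ℤ × ℤ × ℤ) :=
    Finset.Ico 0 (n₁ : ℤ) ×ˢ Finset.Ico 0 (n₂ : ℤ) ×ˢ Finset.Ico 0 (n₃ : ℤ)
  have hcard : (Finset.univ : Finset M).card < box.card := by simpa [box, mul_assoc] using h
  obtain ⟨s, hs, t, ht, hst, hf⟩ :=
    Finset.exists_ne_map_eq_of_card_lt_of_maps_to hcard (f := f) fun _ _ => Finset.mem_univ _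
  simp only [box, Finset.mem_product, Finset.mem_Ico] at hs ht
  refine ⟨s.1 - t.1, s.2.1 - t.2.1, s.2.2 - t.2.2, ?_, by omega, by omega, by omega, ?_⟩
  · simp only [ne_eq, Prod.mk.injEq, not_and]
    intro h₁ h₂ h₃
    exact hst (Prod.ext (by omega) (Prod.ext (by omega) (by omega)))
  · rw [← Prod.mk_sub_mk, ← Prod.mk_sub_mk, map_sub, hf, sub_self]

theorem exists_ne_zero_sq_le_map_eq_zero {M : Type*} [AddCommGroup M] [Fintype M]
    (f : ℤ × ℤ × ℤ →+ M) {m₁ m₂ m₃ : ℕ} (h : Fintype.card M ^ 2 ≤ m₁ * m₂ * m₃) :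
    ∃ u v w : ℤ, (u, v, w) ≠ (0, 0, 0) ∧ u ^ 2 ≤ m₁ ∧ v ^ 2 ≤ m₂ ∧ w ^ 2 ≤ m₃ ∧
      f (u, v, w) = 0 := by
  have hbox : Fintype.card M < (m₁.sqrt + 1) * (m₂.sqrt + 1) * (m₃.sqrt + 1) := by
    refine lt_of_pow_lt_pow_left₀ 2 (Nat.zero_le _) (h.trans_lt ?_)
    rw [mul_pow, mul_pow]
    exact Nat.mul_lt_mul'' (Nat.mul_lt_mul'' (Nat.lt_succ_sqrt' _) (Nat.lt_succ_sqrt' _))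
      (Nat.lt_succ_sqrt' _)
  obtain ⟨u, v, w, hne, hu, hv, hw, hf⟩ := exists_ne_zero_natAbs_lt_map_eq_zero f hbox
  have sq_le {t : ℤ} {m : ℕ} (ht : t.natAbs < m.sqrt + 1) : t ^ 2 ≤ m := by
    rw [← Int.natAbs_sq]
    exact_mod_cast Nat.le_sqrt'.1 (Nat.lt_succ_iff.1 ht)
  exact ⟨u, v, w, hne, sq_le hu, sq_le hv, sq_le hw, hf⟩

section Forms

variable {a b c : ℤ}

theorem HasNontrivialZero.rotate (h : HasNontrivialZero b c a) : HasNontrivialZero a b c := by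
  obtain ⟨x, y, z, hne, heq⟩ := h
  refine ⟨z, x, y, ?_, by linear_combination heq⟩
  simp only [ne_eq, Prod.mk.injEq] at hne ⊢
  tauto

theorem hasNontrivialZero_neg_iff : HasNontrivialZero (-a) (-b) (-c) ↔ HasNontrivialZero a b c :=
  exists₃_congr fun _ _ _ => and_congr_right' ⟨fun h => by linear_combination -h,
    fun h => by linear_combination -h⟩

theorem LegendreResidueConditions.rotate (h : LegendreResidueConditions a b c) :
    LegendreResidueConditions b c a :=
  ⟨h.2.1, h.2.2, h.1⟩

theorem LegendreResidueConditions.neg (h : LegendreResidueConditions a b c) :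
    LegendreResidueConditions (-a) (-b) (-c) := by
  simpa only [LegendreResidueConditions, neg_mul_neg, Int.modEq_neg] using h

theorem not_hasNontrivialZero_of_pos (ha : 0 < a) (hb : 0 < b) (hc : 0 < c) :
    ¬HasNontrivialZero a b c := by
  rintro ⟨x, y, z, hne, heq⟩
  have hax := mul_nonneg ha.le (sq_nonneg x)
  have hby := mul_nonneg hb.le (sq_nonneg y)
  have hcz := mul_nonneg hc.le (sq_nonneg z)
  have hx : x ^ 2 = 0 := by nlinarith
  have hy : y ^ 2 = 0 := by nlinarith
  have hz : z ^ 2 = 0 := by nlinarith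
  simp_all

theorem HasNontrivialZero.exists_primitive (h : HasNontrivialZero a b c) :
    ∃ x y z : ℤ, (∀ p, p ∣ x → p ∣ y → p ∣ z → IsUnit p) ∧
      a * x ^ 2 + b * y ^ 2 + c * z ^ 2 = 0 := by
  obtain ⟨x, y, z, hne, heq⟩ := h
  obtain ⟨g, x', y', z', hg, rfl, rfl, rfl, hprim⟩ := exists_primitive_of_ne_zero hne
  refine ⟨x', y', z', hprim, ?_⟩
  have : g ^ 2 * (a * x' ^ 2 + b * y' ^ 2 + c * z' ^ 2) = 0 := by linear_combination heq
  simpa [hg] using this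

theorem isCoprime_of_primitive_of_form_eq_zero {x y z : ℤ} (hsa : Squarefree a)
    (hab : IsCoprime a b) (hprim : ∀ p, p ∣ x → p ∣ y → p ∣ z → IsUnit p)
    (heq : a * x ^ 2 + b * y ^ 2 + c * z ^ 2 = 0) : IsCoprime z a := by
  refine isCoprime_of_prime_dvd (fun h => hsa.ne_zero h.2) fun p hp hpz hpa => ?_
  have hpy : p ∣ y := by
    have : p ∣ b * y ^ 2 := by
      rw [show b * y ^ 2 = -(a * x ^ 2) - c * z ^ 2 by linear_combination heq]
      exact dvd_sub (dvd_neg.2 (dvd_mul_of_dvd_left hpa _))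
        (dvd_mul_of_dvd_right (dvd_pow hpz two_ne_zero) _)
    refine hp.dvd_of_dvd_pow ((hp.dvd_or_dvd this).resolve_left fun hpb => ?_)
    exact hp.not_isUnit (hab.isUnit_of_dvd' hpa hpb)
  obtain ⟨a', rfl⟩ := hpa
  obtain ⟨y', rfl⟩ := hpy
  obtain ⟨z', rfl⟩ := hpz
  have hpa' : ¬p ∣ a' := fun ⟨k, hk⟩ => hp.not_isUnit (hsa p ⟨k, by rw [hk]; ring⟩)
  -- `p² ∣ a x²` while `p² ∤ a`
  have hpx : p ∣ x := by
    have : p * (a' * x ^ 2) = p * (p * (-(b * y' ^ 2) - c * z' ^ 2)) := by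
      linear_combination heq
    exact hp.dvd_of_dvd_pow
      ((hp.dvd_or_dvd ⟨_, mul_left_cancel₀ hp.ne_zero this⟩).resolve_left hpa')
  exact hp.not_isUnit (hprim p hpx (dvd_mul_right _ _) (dvd_mul_right _ _))

theorem exists_sq_modEq_of_isCoprime {x y z : ℤ} (hza : IsCoprime z a)
    (heq : a * x ^ 2 + b * y ^ 2 + c * z ^ 2 = 0) : ∃ d : ℤ, d ^ 2 ≡ -(b * c) [ZMOD a] := by
  obtain ⟨u, v, huv⟩ := hza
  -- `u` inverts `z` modulo `a`, so `d = b y z⁻¹` works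
  refine ⟨b * y * u,
    (Int.modEq_iff_dvd.2 ⟨-(b * u ^ 2 * x ^ 2) + b * c * v * (1 + u * z), ?_⟩).symm⟩
  linear_combination (b * u ^ 2) * heq - b * c * (1 + u * z) * huv

theorem HasNontrivialZero.legendreResidueConditions (h : HasNontrivialZero a b c)
    (hsa : Squarefree a) (hsb : Squarefree b) (hsc : Squarefree c)
    (hab : IsCoprime a b) (hbc : IsCoprime b c) (hca : IsCoprime c a) :
    LegendreResidueConditions a b c := by
  obtain ⟨x, y, z, hprim, heq⟩ := h.exists_primitive
  have heq' : b * y ^ 2 + c * z ^ 2 + a * x ^ 2 = 0 := by linear_combination heq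
  have heq'' : c * z ^ 2 + a * x ^ 2 + b * y ^ 2 = 0 := by linear_combination heq
  exact ⟨exists_sq_modEq_of_isCoprime
      (isCoprime_of_primitive_of_form_eq_zero hsa hab hprim heq) heq,
    exists_sq_modEq_of_isCoprime (isCoprime_of_primitive_of_form_eq_zero hsb hbc
      (fun p hy hz hx => hprim p hx hy hz) heq') heq',
    exists_sq_modEq_of_isCoprime (isCoprime_of_primitive_of_form_eq_zero hsc hca
      (fun p hz hx hy => hprim p hx hy hz) heq'') heq''⟩

-- `b² v² ≡ d² w² ≡ -b c w² (mod a)`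
theorem dvd_form_of_dvd_sub {d v w : ℤ} (u : ℤ) (hab : IsCoprime a b)
    (hd : d ^ 2 ≡ -(b * c) [ZMOD a]) (h : a ∣ b * v - d * w) :
    a ∣ a * u ^ 2 + b * v ^ 2 + c * w ^ 2 := by
  have hd' : a ∣ d ^ 2 + b * c := by simpa using hd.symm.dvd
  have : a ∣ b * (b * v ^ 2 + c * w ^ 2) := by
    rw [show b * (b * v ^ 2 + c * w ^ 2)
      = (b * v - d * w) * (b * v + d * w) + (d ^ 2 + b * c) * w ^ 2 by ring]
    exact dvd_add (dvd_mul_of_dvd_left h _) (dvd_mul_of_dvd_left hd' _)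
  rw [add_assoc]
  exact dvd_add (dvd_mul_right a _) (hab.dvd_of_dvd_mul_left this)

theorem exists_small_dvd_form (ha : a ≠ 0) (hb : b ≠ 0) (hc : c ≠ 0)
    (hab : IsCoprime a b) (hbc : IsCoprime b c) (hca : IsCoprime c a)
    (h : LegendreResidueConditions a b c) :
    ∃ u v w : ℤ, (u, v, w) ≠ (0, 0, 0) ∧ u ^ 2 ≤ |b * c| ∧ v ^ 2 ≤ |c * a| ∧ w ^ 2 ≤ |a * b| ∧
      a * b * c ∣ a * u ^ 2 + b * v ^ 2 + c * w ^ 2 := by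
  obtain ⟨⟨d, hd⟩, ⟨e, he⟩, ⟨f, hf⟩⟩ := h
  have : NeZero a.natAbs := ⟨Int.natAbs_ne_zero.2 ha⟩
  have : NeZero b.natAbs := ⟨Int.natAbs_ne_zero.2 hb⟩
  have : NeZero c.natAbs := ⟨Int.natAbs_ne_zero.2 hc⟩
  let L : ℤ × ℤ × ℤ →+ ZMod a.natAbs × ZMod b.natAbs × ZMod c.natAbs :=
    AddMonoidHom.mk' (fun t => (((b * t.2.1 - d * t.2.2 : ℤ) : ZMod a.natAbs),
      ((c * t.2.2 - e * t.1 : ℤ) : ZMod b.natAbs), ((a * t.1 - f * t.2.1 : ℤ) : ZMod c.natAbs)))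
      fun s t => by simp only [Prod.fst_add, Prod.snd_add, Prod.mk_add_mk]; push_cast; ring_nf
  have hcard : Fintype.card (ZMod a.natAbs × ZMod b.natAbs × ZMod c.natAbs) ^ 2 ≤
      (b * c).natAbs * (c * a).natAbs * (a * b).natAbs := by
    simp only [Fintype.card_prod, ZMod.card, Int.natAbs_mul]
    ring_nf
    rfl
  obtain ⟨u, v, w, hne, hu, hv, hw, hL⟩ := exists_ne_zero_sq_le_map_eq_zero L hcard
  simp only [L, AddMonoidHom.mk'_apply, Prod.mk_eq_zero, ZMod.intCast_zmod_eq_zero_iff_dvd,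
    Int.natAbs_dvd] at hL
  simp only [Int.natCast_natAbs] at hu hv hw
  refine ⟨u, v, w, hne, hu, hv, hw, ?_⟩
  have hVa := dvd_form_of_dvd_sub u hab hd hL.1
  have hVb : b ∣ a * u ^ 2 + b * v ^ 2 + c * w ^ 2 := by
    convert dvd_form_of_dvd_sub v hbc he hL.2.1 using 1; ring
  have hVc : c ∣ a * u ^ 2 + b * v ^ 2 + c * w ^ 2 := by
    convert dvd_form_of_dvd_sub w hca hf hL.2.2 using 1; ring
  exact (hca.symm.mul_left hbc).mul_dvd (hab.mul_dvd hVa hVb) hVc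

theorem hasNontrivialZero_one_one (hc : c < 0) (h : ∃ f : ℤ, f ^ 2 ≡ -(1 * 1) [ZMOD c]) :
    HasNontrivialZero 1 1 c := by
  obtain ⟨f, hf⟩ := h
  have hsq : IsSquare (-1 : ZMod c.natAbs) := ⟨f, by
    have := (ZMod.intCast_eq_intCast_iff_dvd_sub (f ^ 2) (-1) c.natAbs).2
      (Int.natAbs_dvd.2 (by simpa using hf.dvd))
    push_cast at this
    rw [← this, sq]⟩
  obtain ⟨s, t, hst⟩ := Nat.eq_sq_add_sq_of_isSquare_mod_neg_one hsq
  refine ⟨s, t, 1, by simp, ?_⟩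
  have : (c.natAbs : ℤ) = s ^ 2 + t ^ 2 := by exact_mod_cast hst
  rw [Int.natCast_natAbs, abs_of_neg hc] at this
  linear_combination -this

-- `a (u w + b v)² + b (v w - a u)² = (w² + a b)(a u² + b v²)`: norms from `ℚ(√-ab)` multiply
theorem hasNontrivialZero_of_form_eq_neg {u v w : ℤ} (hab : 0 < a * b)
    (h : a * u ^ 2 + b * v ^ 2 + c * w ^ 2 = -(a * b * c)) : HasNontrivialZero a b c := by
  have hz : w ^ 2 + a * b ≠ 0 := (add_pos_of_nonneg_of_pos (sq_nonneg w) hab).ne'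
  refine ⟨u * w + b * v, v * w - a * u, w ^ 2 + a * b, by simp [hz], ?_⟩
  linear_combination (w ^ 2 + a * b) * h

theorem hasNontrivialZero_of_small_dvd_form {u v w : ℤ} (ha : 0 < a) (hb : 0 < b) (hc : c < 0)
    (hsa : Squarefree a) (hsb : Squarefree b)
    (hab : IsCoprime a b) (hbc : IsCoprime b c) (hca : IsCoprime c a)
    (h11 : ¬(a = 1 ∧ b = 1)) (hne : (u, v, w) ≠ (0, 0, 0))
    (hu : u ^ 2 ≤ |b * c|) (hv : v ^ 2 ≤ |c * a|) (hw : w ^ 2 ≤ |a * b|)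
    (hdvd : a * b * c ∣ a * u ^ 2 + b * v ^ 2 + c * w ^ 2) : HasNontrivialZero a b c := by
  rw [abs_of_neg (mul_neg_of_pos_of_neg hb hc)] at hu
  rw [abs_of_neg (mul_neg_of_neg_of_pos hc ha)] at hv
  rw [abs_of_pos (mul_pos ha hb)] at hw
  obtain ⟨k, hk⟩ := hdvd
  have habc : a * b * c < 0 := mul_neg_of_pos_of_neg (mul_pos ha hb) hc
  have hau := mul_le_mul_of_nonneg_left hu ha.le
  have hbv := mul_le_mul_of_nonneg_left hv hb.le
  have hcw := mul_le_mul_of_nonpos_left hw hc.le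
  have hau₀ := mul_nonneg ha.le (sq_nonneg u)
  have hbv₀ := mul_nonneg hb.le (sq_nonneg v)
  have hcw₀ := mul_nonpos_of_nonpos_of_nonneg hc.le (sq_nonneg w)
  -- the form lies in `[a b c, -2 a b c]`
  have hk₁ : k ≤ 1 := by nlinarith
  have hk₂ : -2 ≤ k := by nlinarith
  interval_cases k
  · have hu' : b * -c = u ^ 2 := by nlinarith
    have hv' : a * -c = v ^ 2 := by nlinarith
    exact absurd ⟨eq_one_of_squarefree_of_mul_eq_sq ha hsa hca.symm.neg_right hv',
      eq_one_of_squarefree_of_mul_eq_sq hb hsb hbc.neg_right hu'⟩ h11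
  · have hform : a * u ^ 2 + b * v ^ 2 + c * w ^ 2 = -(a * b * c) := by linear_combination hk
    exact hasNontrivialZero_of_form_eq_neg (mul_pos ha hb) hform
  · exact ⟨u, v, w, hne, by linear_combination hk⟩
  · have hw' : a * b = w ^ 2 := by nlinarith
    exact absurd ⟨eq_one_of_squarefree_of_mul_eq_sq ha hsa hab hw',
      eq_one_of_squarefree_of_mul_eq_sq hb hsb hab.symm
        (show b * a = w ^ 2 by linear_combination hw')⟩ h11

theorem hasNontrivialZero_of_pos_of_pos_of_neg (ha : 0 < a) (hb : 0 < b) (hc : c < 0)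
    (hsa : Squarefree a) (hsb : Squarefree b)
    (hab : IsCoprime a b) (hbc : IsCoprime b c) (hca : IsCoprime c a)
    (h : LegendreResidueConditions a b c) : HasNontrivialZero a b c := by
  by_cases h11 : a = 1 ∧ b = 1
  · obtain ⟨rfl, rfl⟩ := h11
    exact hasNontrivialZero_one_one hc h.2.2
  obtain ⟨u, v, w, hne, hu, hv, hw, hdvd⟩ :=
    exists_small_dvd_form ha.ne' hb.ne' hc.ne hab hbc hca h
  exact hasNontrivialZero_of_small_dvd_form ha hb hc hsa hsb hab hbc hca h11 hne hu hv hw hdvd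

theorem hasNontrivialZero_of_mul_pos_of_mul_neg (hab' : 0 < a * b) (hac : a * c < 0)
    (hsa : Squarefree a) (hsb : Squarefree b)
    (hab : IsCoprime a b) (hbc : IsCoprime b c) (hca : IsCoprime c a)
    (h : LegendreResidueConditions a b c) : HasNontrivialZero a b c := by
  rcases (left_ne_zero_of_mul hab'.ne').lt_or_gt with ha | ha
  · exact hasNontrivialZero_neg_iff.1 (hasNontrivialZero_of_pos_of_pos_of_neg (neg_pos.2 ha)
      (neg_pos.2 (neg_of_mul_pos_right hab' ha.le))
      (neg_neg_of_pos (pos_of_mul_neg_right hac ha.le))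
      hsa.neg hsb.neg hab.neg_neg hbc.neg_neg hca.neg_neg h.neg)
  · exact hasNontrivialZero_of_pos_of_pos_of_neg ha (pos_of_mul_pos_right hab' ha.le)
      (neg_of_mul_neg_right hac ha.le) hsa hsb hab hbc hca h

end Forms

theorem stmt_3 (a b c : ℤ) (ha : a ≠ 0) (hb : b ≠ 0) (hc : c ≠ 0)
    (hsa : Squarefree a) (hsb : Squarefree b) (hsc : Squarefree c)
    (hab : IsCoprime a b) (hbc : IsCoprime b c) (hca : IsCoprime c a) :
    (∃ x y z : ℤ, (x, y, z) ≠ (0, 0, 0) ∧ a * x ^ 2 + b * y ^ 2 + c * z ^ 2 = 0) ↔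
      (¬ ((0 < a ∧ 0 < b ∧ 0 < c) ∨ (a < 0 ∧ b < 0 ∧ c < 0)) ∧
        (∃ d : ℤ, d ^ 2 ≡ -(b * c) [ZMOD a]) ∧
        (∃ e : ℤ, e ^ 2 ≡ -(c * a) [ZMOD b]) ∧
        (∃ f : ℤ, f ^ 2 ≡ -(a * b) [ZMOD c])) := by
  constructor
  · intro h
    refine ⟨?_, HasNontrivialZero.legendreResidueConditions h hsa hsb hsc hab hbc hca⟩
    rintro (⟨ha, hb, hc⟩ | ⟨ha, hb, hc⟩)
    · exact not_hasNontrivialZero_of_pos ha hb hc h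
    · exact not_hasNontrivialZero_of_pos (neg_pos.2 ha) (neg_pos.2 hb) (neg_pos.2 hc)
        (hasNontrivialZero_neg_iff.2 h)
  · rintro ⟨hsign, hres⟩
    rcases mul_pos_and_mul_neg_of_not_same_sign ha hb hc hsign with
      ⟨h₁, h₂⟩ | ⟨h₁, h₂⟩ | ⟨h₁, h₂⟩
    · exact hasNontrivialZero_of_mul_pos_of_mul_neg h₁ h₂ hsa hsb hab hbc hca hres
    · exact (hasNontrivialZero_of_mul_pos_of_mul_neg h₁ h₂ hsb hsc hbc hca hab
        (LegendreResidueConditions.rotate hres)).rotate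
    · exact (hasNontrivialZero_of_mul_pos_of_mul_neg h₁ h₂ hsc hsa hca hab hbc
        (LegendreResidueConditions.rotate hres).rotate).rotate.rotate
end

section
/- Let a, b be squarefree coprime integers and p a prime. The equation ax² + by² + cz² = 0 with p dividing c (and a,b,c squarefree pairwise coprime) has a nonzero solution over ℚ_p whenever -ab is a quadratic residue mod p, for odd primes p. -/
/-!
Since `p ∣ c` and `c` is coprime to `a` and `b`, the integer `-ab` is a `p`-adic unit. It is a
square mod the odd prime `p`, so Hensel's lemma makes it a square `t²` in `ℤ_[p]`, and then
`(t, a, 0)` is a nontrivial zero of `ax² + by² + cz²`.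
-/

open Polynomial

theorem PadicInt.isSquare_intCast_of_sq_modEq {p : ℕ} [Fact p.Prime] (hp : p ≠ 2) {m d : ℤ}
    (hm : ¬(p : ℤ) ∣ m) (hd : d ^ 2 ≡ m [ZMOD p]) : IsSquare (m : ℤ_[p]) := by
  have hpZ : Prime (p : ℤ) := Nat.prime_iff_prime_int.mp Fact.out
  have h2d : ¬(p : ℤ) ∣ 2 * d := by
    intro h
    rcases hpZ.dvd_mul.mp h with h2 | hpd
    · exact hp ((Nat.prime_dvd_prime_iff_eq Fact.out Nat.prime_two).mp (by exact_mod_cast h2))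
    · exact hm (by simpa using (dvd_pow hpd two_ne_zero).sub hd.symm.dvd)
  have hval : aeval (d : ℤ_[p]) (X ^ 2 - C m) = ((d ^ 2 - m : ℤ) : ℤ_[p]) := by simp
  have hderiv : aeval (d : ℤ_[p]) (derivative (X ^ 2 - C m)) = ((2 * d : ℤ) : ℤ_[p]) := by
    simp [map_ofNat]
  have hnorm : ‖aeval (d : ℤ_[p]) (X ^ 2 - C m)‖ <
      ‖aeval (d : ℤ_[p]) (derivative (X ^ 2 - C m))‖ ^ 2 := by
    rw [hval, hderiv, (PadicInt.norm_intCast_eq_one_iff).mpr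
      ((isCoprime_comm.trans hpZ.coprime_iff_not_dvd).mpr h2d), one_pow]
    exact PadicInt.norm_intCast_lt_one_iff.mpr hd.symm.dvd
  obtain ⟨z, hz, -⟩ := hensels_lemma hnorm
  exact ⟨z, by simpa [sub_eq_zero, sq, eq_comm] using hz⟩

theorem exists_ne_zero_of_isSquare_neg_mul {R : Type*} [CommRing R] {a : R} (b c : R)
    (ha : a ≠ 0) (h : IsSquare (-(a * b))) :
    ∃ x y z : R, (x, y, z) ≠ (0, 0, 0) ∧ a * x ^ 2 + b * y ^ 2 + c * z ^ 2 = 0 := by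
  obtain ⟨t, ht⟩ := h
  refine ⟨t, a, 0, fun h0 => ha (Prod.ext_iff.mp (Prod.ext_iff.mp h0).2).1, ?_⟩
  linear_combination a * ht.symm

theorem stmt_5_general (a b c : ℤ) (p : ℕ) [Fact p.Prime] (hodd : p ≠ 2)
    (ha : a ≠ 0)
    (hbc : IsCoprime b c) (hca : IsCoprime c a)
    (hpc : (p : ℤ) ∣ c)
    (hqr : ∃ d : ℤ, d ^ 2 ≡ -(a * b) [ZMOD (p : ℤ)]) :
    ∃ x y z : ℚ_[p], (x, y, z) ≠ (0, 0, 0) ∧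
      (a : ℚ_[p]) * x ^ 2 + (b : ℚ_[p]) * y ^ 2 + (c : ℚ_[p]) * z ^ 2 = 0 := by
  have hpZ : Prime (p : ℤ) := Nat.prime_iff_prime_int.mp Fact.out
  have hpa : ¬(p : ℤ) ∣ a := fun h => hpZ.not_isUnit (hca.isUnit_of_dvd' hpc h)
  have hpb : ¬(p : ℤ) ∣ b := fun h => hpZ.not_isUnit (hbc.isUnit_of_dvd' h hpc)
  obtain ⟨d, hd⟩ := hqr
  have hsq : IsSquare ((-(a * b) : ℤ) : ℤ_[p]) :=
    PadicInt.isSquare_intCast_of_sq_modEq hodd (dvd_neg.not.mpr (hpZ.not_dvd_mul hpa hpb)) hd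
  refine exists_ne_zero_of_isSquare_neg_mul _ _ (Int.cast_ne_zero.mpr ha) ?_
  simpa using hsq.map PadicInt.Coe.ringHom

theorem stmt_5 (a b c : ℤ) (p : ℕ) [Fact p.Prime] (hodd : p ≠ 2)
    (ha : a ≠ 0) (hb : b ≠ 0) (hc : c ≠ 0)
    (hsa : Squarefree a) (hsb : Squarefree b) (hsc : Squarefree c)
    (hab : IsCoprime a b) (hbc : IsCoprime b c) (hca : IsCoprime c a)
    (hpc : (p : ℤ) ∣ c)
    (hqr : ∃ d : ℤ, d ^ 2 ≡ -(a * b) [ZMOD (p : ℤ)]) :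
    ∃ x y z : ℚ_[p], (x, y, z) ≠ (0, 0, 0) ∧
      (a : ℚ_[p]) * x ^ 2 + (b : ℚ_[p]) * y ^ 2 + (c : ℚ_[p]) * z ^ 2 = 0 :=
  stmt_5_general a b c p hodd ha hbc hca hpc hqr
end

section
/- Let a, b, c be nonzero squarefree pairwise coprime odd integers such that a ≡ b ≡ c ≡ 1 (mod 4) or a ≡ b ≡ c ≡ 3 (mod 4). Then ax² + by² + cz² = 0 has no nonzero solution over ℚ₂ (the 2-adic numbers). -/
private lemma sq_zmod4 : ∀ t : ZMod (2^2), t ^ 2 = 0 ∨ t ^ 2 = 1 := by decide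

private lemma cast_res (a : ℤ) (r : ℤ) (h : a % 4 = r) :
    ((a : ZMod (2^2))) = ((r : ℤ) : ZMod (2^2)) := by
  have h4 : ((4 : ZMod (2^2))) = 0 := by decide
  conv_lhs => rw [← Int.mul_ediv_add_emod a 4, h]
  push_cast
  rw [h4]; ring

private lemma aux (a b c : ℤ)
    (hcong : (a % 4 = 1 ∧ b % 4 = 1 ∧ c % 4 = 1) ∨ (a % 4 = 3 ∧ b % 4 = 3 ∧ c % 4 = 3))
    (y z : ℤ_[2]) (h : (a : ℤ_[2]) + (b : ℤ_[2]) * y ^ 2 + (c : ℤ_[2]) * z ^ 2 = 0) :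
    False := by
  have h4 := congrArg (PadicInt.toZModPow 2) h
  simp only [map_add, map_mul, map_pow, map_intCast, map_zero] at h4
  set Y := PadicInt.toZModPow 2 y with hY
  set Z := PadicInt.toZModPow 2 z with hZ
  rcases hcong with ⟨ha1, hb1, hc1⟩ | ⟨ha1, hb1, hc1⟩ <;>
    rw [cast_res a _ ha1, cast_res b _ hb1, cast_res c _ hc1] at h4 <;>
    rcases sq_zmod4 Y with hy | hy <;> rcases sq_zmod4 Z with hz | hz <;>
    rw [hy, hz] at h4 <;> revert h4 <;> decide

private lemma aux2 (a b c : ℤ)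
    (hcong : (a % 4 = 1 ∧ b % 4 = 1 ∧ c % 4 = 1) ∨ (a % 4 = 3 ∧ b % 4 = 3 ∧ c % 4 = 3))
    (x y z : ℚ_[2]) (hx : x ≠ 0) (hy : ‖y‖ ≤ ‖x‖) (hz : ‖z‖ ≤ ‖x‖)
    (heq : (a : ℚ_[2]) * x ^ 2 + (b : ℚ_[2]) * y ^ 2 + (c : ℚ_[2]) * z ^ 2 = 0) : False := by
  have hY : ‖y / x‖ ≤ 1 := by
    rw [norm_div]; exact div_le_one_of_le₀ hy (norm_nonneg _)
  have hZ : ‖z / x‖ ≤ 1 := by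
    rw [norm_div]; exact div_le_one_of_le₀ hz (norm_nonneg _)
  apply aux a b c hcong ⟨y / x, hY⟩ ⟨z / x, hZ⟩
  have h2 : (a : ℚ_[2]) + (b : ℚ_[2]) * (y / x) ^ 2 + (c : ℚ_[2]) * (z / x) ^ 2 = 0 := by
    field_simp
    linear_combination heq
  apply Subtype.ext
  push_cast
  exact h2

theorem stmt_6 (a b c : ℤ) (ha : a ≠ 0) (hb : b ≠ 0) (hc : c ≠ 0)
    (hoa : Odd a) (hob : Odd b) (hoc : Odd c)
    (hsa : Squarefree a) (hsb : Squarefree b) (hsc : Squarefree c)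
    (hab : IsCoprime a b) (hbc : IsCoprime b c) (hca : IsCoprime c a)
    (hcong : (a % 4 = 1 ∧ b % 4 = 1 ∧ c % 4 = 1) ∨ (a % 4 = 3 ∧ b % 4 = 3 ∧ c % 4 = 3)) :
    ¬ ∃ x y z : ℚ_[2], (x, y, z) ≠ (0, 0, 0) ∧
      (a : ℚ_[2]) * x ^ 2 + (b : ℚ_[2]) * y ^ 2 + (c : ℚ_[2]) * z ^ 2 = 0 := by
  rintro ⟨x, y, z, hne, heq⟩
  have hcong' : (b % 4 = 1 ∧ a % 4 = 1 ∧ c % 4 = 1) ∨ (b % 4 = 3 ∧ a % 4 = 3 ∧ c % 4 = 3) := by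
    tauto
  have hcong'' : (c % 4 = 1 ∧ a % 4 = 1 ∧ b % 4 = 1) ∨ (c % 4 = 3 ∧ a % 4 = 3 ∧ b % 4 = 3) := by
    tauto
  have hzero : ¬ (x = 0 ∧ y = 0 ∧ z = 0) := by
    rintro ⟨h1, h2, h3⟩; exact hne (by simp [h1, h2, h3])
  rcases le_total ‖x‖ ‖y‖ with h1 | h1
  · rcases le_total ‖y‖ ‖z‖ with h2 | h2
    · -- z max
      have hz0 : z ≠ 0 := by
        intro h; apply hzero
        have hzn : ‖z‖ = 0 := by simp [h]
        refine ⟨norm_le_zero_iff.mp ?_, norm_le_zero_iff.mp ?_, h⟩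
        · exact hzn ▸ h1.trans h2
        · exact hzn ▸ h2
      exact aux2 c a b hcong'' z x y hz0 (h1.trans h2) h2 (by linear_combination heq)
    · -- y max
      have hy0 : y ≠ 0 := by
        intro h; apply hzero
        have hyn : ‖y‖ = 0 := by simp [h]
        refine ⟨norm_le_zero_iff.mp ?_, h, norm_le_zero_iff.mp ?_⟩
        · exact hyn ▸ h1
        · exact hyn ▸ h2
      exact aux2 b a c hcong' y x z hy0 h1 h2 (by linear_combination heq)
  · rcases le_total ‖x‖ ‖z‖ with h2 | h2
    · -- z max
      have hz0 : z ≠ 0 := by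
        intro h; apply hzero
        have hzn : ‖z‖ = 0 := by simp [h]
        refine ⟨norm_le_zero_iff.mp ?_, norm_le_zero_iff.mp ?_, h⟩
        · exact hzn ▸ h2
        · exact hzn ▸ h1.trans h2
      exact aux2 c a b hcong'' z x y hz0 h2 (h1.trans h2) (by linear_combination heq)
    · -- x max
      have hx0 : x ≠ 0 := by
        intro h; apply hzero
        have hxn : ‖x‖ = 0 := by simp [h]
        refine ⟨h, norm_le_zero_iff.mp ?_, norm_le_zero_iff.mp ?_⟩
        · exact hxn ▸ h1
        · exact hxn ▸ h2
      exact aux2 a b c hcong x y z hx0 h1 h2 heq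
end

section
/- Let a, b, c be nonzero squarefree pairwise coprime odd integers satisfying conditions (A) and (B) of Legendre's theorem. Then it is not the case that a ≡ b ≡ c ≡ 1 (mod 4), nor that a ≡ b ≡ c ≡ 3 (mod 4). -/
open scoped NumberTheorySymbols
open ZMod

private lemma jac_one {m n : ℤ} (hcop : IsCoprime m n)
    (h : ∃ d : ℤ, d ^ 2 ≡ m [ZMOD n]) : J(m | n.natAbs) = 1 := by
  obtain ⟨d, hd⟩ := h
  have hg : m.gcd (n.natAbs : ℤ) = 1 := by
    have h0 := Int.isCoprime_iff_gcd_eq_one.mp hcop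
    show m.natAbs.gcd ((n.natAbs : ℤ)).natAbs = 1
    rw [Int.natAbs_natCast]
    exact h0
  rcases jacobiSym.eq_one_or_neg_one hg with h1 | h1
  · exact h1
  · exfalso
    obtain ⟨p, pp, hpn, hp⟩ := jacobiSym.eq_neg_one_at_prime_divisor_of_eq_neg_one h1
    haveI : Fact p.Prime := ⟨pp⟩
    apply ZMod.nonsquare_of_jacobiSym_eq_neg_one hp
    have hpd : (p : ℤ) ∣ n := by
      refine dvd_trans (Int.natCast_dvd_natCast.mpr hpn) ?_
      exact Int.natAbs_dvd.mpr dvd_rfl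
    have hd' : d ^ 2 ≡ m [ZMOD (p : ℤ)] := hd.of_dvd hpd
    have h2 : ((d ^ 2 : ℤ) : ZMod p) = (m : ZMod p) :=
      (ZMod.intCast_eq_intCast_iff _ _ _).mpr hd'
    refine ⟨(d : ZMod p), ?_⟩
    rw [← h2]; push_cast; ring

private lemma parity_helper {A B C : ℕ} (i j k pa pb pc : ℕ)
    (hA2 : A % 2 = 1) (hB2 : B % 2 = 1) (hC2 : C % 2 = 1)
    (ha : A / 2 % 2 = pa) (hb : B / 2 % 2 = pb) (hc : C / 2 % 2 = pc)
    (h : (i % 2 * pa + j % 2 * pb + k % 2 * pc + pa * pb + pb * pc + pc * pa) % 2 = 1) :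
    (χ₄ A : ℤ) ^ i * (χ₄ B) ^ j * (χ₄ C) ^ k *
      ((-1 : ℤ) ^ (A / 2 * (B / 2)) * (-1) ^ (B / 2 * (C / 2)) * (-1) ^ (C / 2 * (A / 2))) = -1 := by
  rw [ZMod.χ₄_eq_neg_one_pow hA2, ZMod.χ₄_eq_neg_one_pow hB2, ZMod.χ₄_eq_neg_one_pow hC2,
    ← pow_mul, ← pow_mul, ← pow_mul, ← pow_add, ← pow_add, ← pow_add, ← pow_add, ← pow_add]
  have hodd : Odd (A / 2 * i + B / 2 * j + C / 2 * k +
      (A / 2 * (B / 2) + B / 2 * (C / 2) + C / 2 * (A / 2))) := by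
    rw [Nat.odd_iff]
    have e1 : A / 2 * (B / 2) % 2 = pa * pb % 2 := by rw [Nat.mul_mod, ha, hb]
    have e2 : B / 2 * (C / 2) % 2 = pb * pc % 2 := by rw [Nat.mul_mod, hb, hc]
    have e3 : C / 2 * (A / 2) % 2 = pc * pa % 2 := by rw [Nat.mul_mod, hc, ha]
    have f1 : A / 2 * i % 2 = i % 2 * pa % 2 := by
      rw [Nat.mul_mod, ha, Nat.mul_comm pa (i % 2)]
    have f2 : B / 2 * j % 2 = j % 2 * pb % 2 := by
      rw [Nat.mul_mod, hb, Nat.mul_comm pb (j % 2)]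
    have f3 : C / 2 * k % 2 = k % 2 * pc % 2 := by
      rw [Nat.mul_mod, hc, Nat.mul_comm pc (k % 2)]
    omega
  exact hodd.neg_one_pow

private lemma aux_s7 (A B C i j k : ℕ) (hA : Odd A) (hB : Odd B) (hC : Odd C)
    (cab : Nat.Coprime A B) (cbc : Nat.Coprime B C) (cca : Nat.Coprime C A)
    (h1 : J((-1) ^ i * ((B : ℤ) * (C : ℤ)) | A) = 1)
    (h2 : J((-1) ^ j * ((C : ℤ) * (A : ℤ)) | B) = 1)
    (h3 : J((-1) ^ k * ((A : ℤ) * (B : ℤ)) | C) = 1)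
    (hcon : (χ₄ A : ℤ) ^ i * (χ₄ B) ^ j * (χ₄ C) ^ k *
      ((-1 : ℤ) ^ (A / 2 * (B / 2)) * (-1) ^ (B / 2 * (C / 2)) * (-1) ^ (C / 2 * (A / 2))) ≠ 1) :
    False := by
  rw [jacobiSym.mul_left, jacobiSym.mul_left, jacobiSym.pow_left,
    jacobiSym.at_neg_one hA] at h1
  rw [jacobiSym.mul_left, jacobiSym.mul_left, jacobiSym.pow_left,
    jacobiSym.at_neg_one hB] at h2
  rw [jacobiSym.mul_left, jacobiSym.mul_left, jacobiSym.pow_left,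
    jacobiSym.at_neg_one hC] at h3
  have gBA : ((B : ℤ)).gcd A = 1 := by rw [Int.gcd_natCast_natCast]; exact cab.symm
  have gCB : ((C : ℤ)).gcd B = 1 := by rw [Int.gcd_natCast_natCast]; exact cbc.symm
  have gAC : ((A : ℤ)).gcd C = 1 := by rw [Int.gcd_natCast_natCast]; exact cca.symm
  have q1 : J((B : ℤ) | A) * J((A : ℤ) | B) = (-1 : ℤ) ^ (A / 2 * (B / 2)) := by
    rw [jacobiSym.quadratic_reciprocity hA hB, mul_comm, mul_assoc, ← sq,
      jacobiSym.sq_one gBA, mul_one]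
  have q2 : J((C : ℤ) | B) * J((B : ℤ) | C) = (-1 : ℤ) ^ (B / 2 * (C / 2)) := by
    rw [jacobiSym.quadratic_reciprocity hB hC, mul_comm, mul_assoc, ← sq,
      jacobiSym.sq_one gCB, mul_one]
  have q3 : J((A : ℤ) | C) * J((C : ℤ) | A) = (-1 : ℤ) ^ (C / 2 * (A / 2)) := by
    rw [jacobiSym.quadratic_reciprocity hC hA, mul_comm, mul_assoc, ← sq,
      jacobiSym.sq_one gAC, mul_one]
  apply hcon
  rw [← q1, ← q2, ← q3]
  linear_combination ((χ₄ B : ℤ) ^ j * (J((C:ℤ) | B) * J((A:ℤ) | B)) *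
      ((χ₄ C : ℤ) ^ k * (J((A:ℤ) | C) * J((B:ℤ) | C)))) * h1 +
    ((χ₄ C : ℤ) ^ k * (J((A:ℤ) | C) * J((B:ℤ) | C))) * h2 + h3

private lemma signCase (a b c : ℤ) (i j k pa pb pc : ℕ)
    (hoa : Odd a) (hob : Odd b) (hoc : Odd c)
    (hab : IsCoprime a b) (hbc : IsCoprime b c) (hca : IsCoprime c a)
    (j1 : J(-(b * c) | a.natAbs) = 1) (j2 : J(-(c * a) | b.natAbs) = 1)
    (j3 : J(-(a * b) | c.natAbs) = 1)
    (e1 : (-1 : ℤ) ^ i * ((b.natAbs : ℤ) * (c.natAbs : ℤ)) = -(b * c))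
    (e2 : (-1 : ℤ) ^ j * ((c.natAbs : ℤ) * (a.natAbs : ℤ)) = -(c * a))
    (e3 : (-1 : ℤ) ^ k * ((a.natAbs : ℤ) * (b.natAbs : ℤ)) = -(a * b))
    (a2 : a.natAbs / 2 % 2 = pa) (b2 : b.natAbs / 2 % 2 = pb) (c2 : c.natAbs / 2 % 2 = pc)
    (hpar : (i % 2 * pa + j % 2 * pb + k % 2 * pc + pa * pb + pb * pc + pc * pa) % 2 = 1) :
    False := by
  have hA : Odd a.natAbs := Int.natAbs_odd.mpr hoa
  have hB : Odd b.natAbs := Int.natAbs_odd.mpr hob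
  have hC : Odd c.natAbs := Int.natAbs_odd.mpr hoc
  refine aux_s7 a.natAbs b.natAbs c.natAbs i j k hA hB hC
    (Int.isCoprime_iff_gcd_eq_one.mp hab) (Int.isCoprime_iff_gcd_eq_one.mp hbc)
    (Int.isCoprime_iff_gcd_eq_one.mp hca)
    (by rw [e1]; exact j1) (by rw [e2]; exact j2) (by rw [e3]; exact j3) ?_
  rw [parity_helper i j k pa pb pc (Nat.odd_iff.mp hA) (Nat.odd_iff.mp hB)
    (Nat.odd_iff.mp hC) a2 b2 c2 hpar]
  decide

theorem stmt_7 (a b c : ℤ) (ha : a ≠ 0) (hb : b ≠ 0) (hc : c ≠ 0)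
    (hoa : Odd a) (hob : Odd b) (hoc : Odd c)
    (hsa : Squarefree a) (hsb : Squarefree b) (hsc : Squarefree c)
    (hab : IsCoprime a b) (hbc : IsCoprime b c) (hca : IsCoprime c a)
    (hA : ¬ ((0 < a ∧ 0 < b ∧ 0 < c) ∨ (a < 0 ∧ b < 0 ∧ c < 0)))
    (hB1 : ∃ d : ℤ, d ^ 2 ≡ -(b * c) [ZMOD a])
    (hB2 : ∃ e : ℤ, e ^ 2 ≡ -(c * a) [ZMOD b])
    (hB3 : ∃ f : ℤ, f ^ 2 ≡ -(a * b) [ZMOD c]) :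
    ¬ (a % 4 = 1 ∧ b % 4 = 1 ∧ c % 4 = 1) ∧ ¬ (a % 4 = 3 ∧ b % 4 = 3 ∧ c % 4 = 3) := by
  have j1 : J(-(b * c) | a.natAbs) = 1 :=
    jac_one (((hab.symm.mul_left hca).neg_left)) hB1
  have j2 : J(-(c * a) | b.natAbs) = 1 :=
    jac_one (((hbc.symm.mul_left hab).neg_left)) hB2
  have j3 : J(-(a * b) | c.natAbs) = 1 :=
    jac_one (((hca.symm.mul_left hbc).neg_left)) hB3
  suffices H : ∀ r : ℤ, r = 1 ∨ r = 3 → ¬(a % 4 = r ∧ b % 4 = r ∧ c % 4 = r) by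
    exact ⟨H 1 (Or.inl rfl), H 3 (Or.inr rfl)⟩
  rintro r hr ⟨ha4, hb4, hc4⟩
  rcases lt_or_gt_of_ne ha with ha' | ha' <;> rcases lt_or_gt_of_ne hb with hb' | hb' <;>
    rcases lt_or_gt_of_ne hc with hc' | hc'
  · exact hA (Or.inr ⟨ha', hb', hc'⟩)
  -- a<0 b<0 c>0 : i=0 (bc<0), j=0 (ca<0), k=1 (ab>0)
  · have na : (a.natAbs : ℤ) = -a := by omega
    have nb : (b.natAbs : ℤ) = -b := by omega
    have nc : (c.natAbs : ℤ) = c := by omega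
    rcases hr with rfl | rfl
    · exact signCase a b c 0 0 1 1 1 0 hoa hob hoc hab hbc hca j1 j2 j3
        (by rw [nb, nc]; ring) (by rw [nc, na]; ring) (by rw [na, nb]; ring)
        (by omega) (by omega) (by omega) (by decide)
    · exact signCase a b c 0 0 1 0 0 1 hoa hob hoc hab hbc hca j1 j2 j3
        (by rw [nb, nc]; ring) (by rw [nc, na]; ring) (by rw [na, nb]; ring)
        (by omega) (by omega) (by omega) (by decide)
  -- a<0 b>0 c<0 : i=0, j=1 (ca>0), k=0
  · have na : (a.natAbs : ℤ) = -a := by omega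
    have nb : (b.natAbs : ℤ) = b := by omega
    have nc : (c.natAbs : ℤ) = -c := by omega
    rcases hr with rfl | rfl
    · exact signCase a b c 0 1 0 1 0 1 hoa hob hoc hab hbc hca j1 j2 j3
        (by rw [nb, nc]; ring) (by rw [nc, na]; ring) (by rw [na, nb]; ring)
        (by omega) (by omega) (by omega) (by decide)
    · exact signCase a b c 0 1 0 0 1 0 hoa hob hoc hab hbc hca j1 j2 j3
        (by rw [nb, nc]; ring) (by rw [nc, na]; ring) (by rw [na, nb]; ring)
        (by omega) (by omega) (by omega) (by decide)
  -- a<0 b>0 c>0 : i=1 (bc>0), j=0, k=0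
  · have na : (a.natAbs : ℤ) = -a := by omega
    have nb : (b.natAbs : ℤ) = b := by omega
    have nc : (c.natAbs : ℤ) = c := by omega
    rcases hr with rfl | rfl
    · exact signCase a b c 1 0 0 1 0 0 hoa hob hoc hab hbc hca j1 j2 j3
        (by rw [nb, nc]; ring) (by rw [nc, na]; ring) (by rw [na, nb]; ring)
        (by omega) (by omega) (by omega) (by decide)
    · exact signCase a b c 1 0 0 0 1 1 hoa hob hoc hab hbc hca j1 j2 j3
        (by rw [nb, nc]; ring) (by rw [nc, na]; ring) (by rw [na, nb]; ring)
        (by omega) (by omega) (by omega) (by decide)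
  -- a>0 b<0 c<0 : i=1, j=0, k=0
  · have na : (a.natAbs : ℤ) = a := by omega
    have nb : (b.natAbs : ℤ) = -b := by omega
    have nc : (c.natAbs : ℤ) = -c := by omega
    rcases hr with rfl | rfl
    · exact signCase a b c 1 0 0 0 1 1 hoa hob hoc hab hbc hca j1 j2 j3
        (by rw [nb, nc]; ring) (by rw [nc, na]; ring) (by rw [na, nb]; ring)
        (by omega) (by omega) (by omega) (by decide)
    · exact signCase a b c 1 0 0 1 0 0 hoa hob hoc hab hbc hca j1 j2 j3
        (by rw [nb, nc]; ring) (by rw [nc, na]; ring) (by rw [na, nb]; ring)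
        (by omega) (by omega) (by omega) (by decide)
  -- a>0 b<0 c>0 : i=0, j=1, k=0
  · have na : (a.natAbs : ℤ) = a := by omega
    have nb : (b.natAbs : ℤ) = -b := by omega
    have nc : (c.natAbs : ℤ) = c := by omega
    rcases hr with rfl | rfl
    · exact signCase a b c 0 1 0 0 1 0 hoa hob hoc hab hbc hca j1 j2 j3
        (by rw [nb, nc]; ring) (by rw [nc, na]; ring) (by rw [na, nb]; ring)
        (by omega) (by omega) (by omega) (by decide)
    · exact signCase a b c 0 1 0 1 0 1 hoa hob hoc hab hbc hca j1 j2 j3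
        (by rw [nb, nc]; ring) (by rw [nc, na]; ring) (by rw [na, nb]; ring)
        (by omega) (by omega) (by omega) (by decide)
  -- a>0 b>0 c<0 : i=0, j=0, k=1
  · have na : (a.natAbs : ℤ) = a := by omega
    have nb : (b.natAbs : ℤ) = b := by omega
    have nc : (c.natAbs : ℤ) = -c := by omega
    rcases hr with rfl | rfl
    · exact signCase a b c 0 0 1 0 0 1 hoa hob hoc hab hbc hca j1 j2 j3
        (by rw [nb, nc]; ring) (by rw [nc, na]; ring) (by rw [na, nb]; ring)
        (by omega) (by omega) (by omega) (by decide)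
    · exact signCase a b c 0 0 1 1 1 0 hoa hob hoc hab hbc hca j1 j2 j3
        (by rw [nb, nc]; ring) (by rw [nc, na]; ring) (by rw [na, nb]; ring)
        (by omega) (by omega) (by omega) (by decide)
  · exact hA (Or.inl ⟨ha', hb', hc'⟩)
end

section
/- Let a, b be negative odd squarefree coprime integers and c a positive odd squarefree integer coprime to a and b, with -ab a QR mod c, -bc a QR mod -a, and -ac a QR mod -b. Then the Jacobi symbol identity (-1/c)·((-a)/(-b))·((-b)/(-a))·((-a)/c)·(c/(-a))·((-b)/c)·(c/(-b)) = 1 holds. -/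
lemma aux_jacobi_one {m n : ℤ} (hn : 0 < n) (hco : IsCoprime m n)
    (h : ∃ d : ℤ, d ^ 2 ≡ m [ZMOD n]) : jacobiSym m n.natAbs = 1 := by
  obtain ⟨d, hd⟩ := h
  have hmod : d ^ 2 ≡ m [ZMOD (n.natAbs : ℤ)] := by
    rwa [Int.natAbs_of_nonneg hn.le]
  have hco' : IsCoprime (d ^ 2) n := by
    obtain ⟨k, hk⟩ := Int.ModEq.dvd hd.symm
    have : d ^ 2 = m + n * k := by linarith
    rw [this]
    exact (IsCoprime.add_mul_left_left hco k)
  have hcd : IsCoprime d n := (IsCoprime.pow_left_iff (by norm_num)).mp hco'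
  have hgcd : d.gcd n.natAbs = 1 := by
    have h' := Int.isCoprime_iff_gcd_eq_one.mp hcd
    rw [Int.gcd, Int.natAbs_natCast]
    exact h'
  calc jacobiSym m n.natAbs = jacobiSym (d ^ 2) n.natAbs :=
        (jacobiSym.mod_left' hmod).symm
    _ = 1 := jacobiSym.sq_one' hgcd

theorem stmt_8 (a b c : ℤ) (hna : a < 0) (hnb : b < 0) (hpc : 0 < c)
    (hoa : Odd a) (hob : Odd b) (hoc : Odd c)
    (hsa : Squarefree a) (hsb : Squarefree b) (hsc : Squarefree c)
    (hab : IsCoprime a b) (hbc : IsCoprime b c) (hca : IsCoprime c a)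
    (h1 : ∃ d : ℤ, d ^ 2 ≡ -(a * b) [ZMOD c])
    (h2 : ∃ e : ℤ, e ^ 2 ≡ -(b * c) [ZMOD (-a)])
    (h3 : ∃ f : ℤ, f ^ 2 ≡ -(a * c) [ZMOD (-b)]) :
    jacobiSym (-1) c.natAbs * jacobiSym (-a) (-b).natAbs * jacobiSym (-b) (-a).natAbs *
      jacobiSym (-a) c.natAbs * jacobiSym c (-a).natAbs *
      jacobiSym (-b) c.natAbs * jacobiSym c (-b).natAbs = 1 := by
  have j1 : jacobiSym (-(a * b)) c.natAbs = 1 :=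
    aux_jacobi_one hpc ((hca.symm.mul_left hbc).neg_left) h1
  have j2 : jacobiSym (-(b * c)) (-a).natAbs = 1 :=
    aux_jacobi_one (by linarith) ((hab.symm.mul_left hca).neg_left.neg_right) h2
  have j3 : jacobiSym (-(a * c)) (-b).natAbs = 1 :=
    aux_jacobi_one (by linarith) ((hab.mul_left hbc.symm).neg_left.neg_right) h3
  have e1 : jacobiSym (-1) c.natAbs * jacobiSym (-a) c.natAbs * jacobiSym (-b) c.natAbs = 1 := by
    rw [← jacobiSym.mul_left, ← jacobiSym.mul_left]
    rw [show (-1 : ℤ) * -a * -b = -(a * b) by ring]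
    exact j1
  have e2 : jacobiSym (-b) (-a).natAbs * jacobiSym c (-a).natAbs = 1 := by
    rw [← jacobiSym.mul_left, show (-b : ℤ) * c = -(b * c) by ring]
    exact j2
  have e3 : jacobiSym (-a) (-b).natAbs * jacobiSym c (-b).natAbs = 1 := by
    rw [← jacobiSym.mul_left, show (-a : ℤ) * c = -(a * c) by ring]
    exact j3
  calc jacobiSym (-1) c.natAbs * jacobiSym (-a) (-b).natAbs * jacobiSym (-b) (-a).natAbs *
      jacobiSym (-a) c.natAbs * jacobiSym c (-a).natAbs *
      jacobiSym (-b) c.natAbs * jacobiSym c (-b).natAbs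
      = (jacobiSym (-1) c.natAbs * jacobiSym (-a) c.natAbs * jacobiSym (-b) c.natAbs) *
        (jacobiSym (-b) (-a).natAbs * jacobiSym c (-a).natAbs) *
        (jacobiSym (-a) (-b).natAbs * jacobiSym c (-b).natAbs) := by ring
    _ = 1 := by rw [e1, e2, e3]; ring
end

section
/- Let a, b, c' be odd integers with a, b, 2c' squarefree and pairwise coprime, a < 0, b < 0, c' > 0, and suppose there exist d, e, f with d² ≡ -ab (mod c'), e² ≡ -2bc' (mod -a), f² ≡ -2ac' (mod -b). Then the Jacobi symbol identity (-1/c')·(2/(ab))·((-a)/(-b))·((-b)/(-a))·((-a)/c')·(c'/(-a))·((-b)/c')·(c'/(-b)) = 1 holds. -/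
lemma jac_one_of_qr (x n d : ℤ) (hn : 0 < n) (h : d ^ 2 ≡ x [ZMOD n])
    (hc : IsCoprime x n) : jacobiSym x n.natAbs = 1 := by
  have hcast : ((n.natAbs : ℤ)) = n := Int.natAbs_of_nonneg hn.le
  have hmod : d ^ 2 % (n.natAbs : ℤ) = x % (n.natAbs : ℤ) := by
    rw [hcast]; exact h
  rw [← jacobiSym.mod_left' hmod]
  obtain ⟨k, hk⟩ := h.dvd
  have hd2 : d ^ 2 = x + n * (-k) := by linarith
  have hcop : IsCoprime (d ^ 2) n := hd2 ▸ hc.add_mul_left_left (-k)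
  have hg : Int.gcd d n = 1 := Int.isCoprime_iff_gcd_eq_one.mp
    ((IsCoprime.pow_left_iff (by norm_num)).mp hcop)
  refine jacobiSym.sq_one' ?_
  rwa [hcast]

theorem stmt_11 (a b c' : ℤ) (hna : a < 0) (hnb : b < 0) (hpc : 0 < c')
    (hoa : Odd a) (hob : Odd b) (hoc : Odd c')
    (hsa : Squarefree a) (hsb : Squarefree b) (hsc : Squarefree (2 * c'))
    (hab : IsCoprime a b) (hbc : IsCoprime b (2 * c')) (hca : IsCoprime (2 * c') a)
    (h1 : ∃ d : ℤ, d ^ 2 ≡ -(a * b) [ZMOD c'])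
    (h2 : ∃ e : ℤ, e ^ 2 ≡ -(2 * b * c') [ZMOD (-a)])
    (h3 : ∃ f : ℤ, f ^ 2 ≡ -(2 * a * c') [ZMOD (-b)]) :
    jacobiSym (-1) c'.natAbs * jacobiSym 2 (a * b).natAbs *
      jacobiSym (-a) (-b).natAbs * jacobiSym (-b) (-a).natAbs *
      jacobiSym (-a) c'.natAbs * jacobiSym c' (-a).natAbs *
      jacobiSym (-b) c'.natAbs * jacobiSym c' (-b).natAbs = 1 := by
  obtain ⟨d, hd⟩ := h1
  obtain ⟨e, he⟩ := h2
  obtain ⟨f, hf⟩ := h3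
  have hbc' : IsCoprime b c' := hbc.of_mul_right_right
  have h2b : IsCoprime (2 : ℤ) b := hbc.of_mul_right_left.symm
  have hac' : IsCoprime a c' := (hca.symm.of_mul_right_right)
  have h2a : IsCoprime (2 : ℤ) a := hca.of_mul_left_left
  -- the three key facts
  have K1 : jacobiSym (-(a * b)) c'.natAbs = 1 :=
    jac_one_of_qr _ _ d hpc hd ((hac'.mul_left hbc').neg_left)
  have K2 : jacobiSym (-(2 * b * c')) (-a).natAbs = 1 := by
    refine jac_one_of_qr _ _ e (by linarith) he ?_
    exact (((h2a.mul_left hab.symm).mul_left (hca.of_mul_left_right)).neg_left).neg_right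
  have K3 : jacobiSym (-(2 * a * c')) (-b).natAbs = 1 := by
    refine jac_one_of_qr _ _ f (by linarith) hf ?_
    exact (((h2b.mul_left hab).mul_left hbc'.symm).neg_left).neg_right
  -- expand via multiplicativity
  have E1 : jacobiSym (-(a * b)) c'.natAbs =
      jacobiSym (-1) c'.natAbs * jacobiSym (-a) c'.natAbs * jacobiSym (-b) c'.natAbs := by
    rw [← jacobiSym.mul_left, ← jacobiSym.mul_left]; ring_nf
  have E2 : jacobiSym (-(2 * b * c')) (-a).natAbs =
      jacobiSym 2 (-a).natAbs * jacobiSym (-b) (-a).natAbs * jacobiSym c' (-a).natAbs := by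
    rw [← jacobiSym.mul_left, ← jacobiSym.mul_left]; ring_nf
  have E3 : jacobiSym (-(2 * a * c')) (-b).natAbs =
      jacobiSym 2 (-b).natAbs * jacobiSym (-a) (-b).natAbs * jacobiSym c' (-b).natAbs := by
    rw [← jacobiSym.mul_left, ← jacobiSym.mul_left]; ring_nf
  have hAB : (a * b).natAbs = (-a).natAbs * (-b).natAbs := by
    rw [Int.natAbs_mul, Int.natAbs_neg, Int.natAbs_neg]
  have hA0 : (-a).natAbs ≠ 0 := by simp; omega
  have hB0 : (-b).natAbs ≠ 0 := by simp; omega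
  have E4 : jacobiSym 2 (a * b).natAbs =
      jacobiSym 2 (-a).natAbs * jacobiSym 2 (-b).natAbs := by
    rw [hAB, jacobiSym.mul_right' _ hA0 hB0]
  rw [E1] at K1; rw [E2] at K2; rw [E3] at K3
  rw [E4]
  linear_combination (jacobiSym 2 (-a).natAbs * jacobiSym (-b) (-a).natAbs *
      jacobiSym c' (-a).natAbs * jacobiSym 2 (-b).natAbs * jacobiSym (-a) (-b).natAbs *
      jacobiSym c' (-b).natAbs) * K1 +
    (jacobiSym 2 (-b).natAbs * jacobiSym (-a) (-b).natAbs * jacobiSym c' (-b).natAbs) * K2 + K3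
end

section
/- Let a, b, c be nonzero squarefree pairwise coprime integers with exactly c even, c = 2c', and suppose c' ≡ 1 (mod 4) and (a, b) ≡ (1, 1) (mod 8). Then ax² + by² + cz² = 0 has no nonzero solution over ℚ₂. -/
/-!
Scale a nonzero solution by its coordinate of largest norm: this gives a solution in `ℤ₂` with
a unit coordinate. Modulo 8 the equation becomes `X² + Y² + 2Z² ≡ 0`, which has no solution with
a unit coordinate: odd squares are `1` and even squares `0` or `4` modulo 8.
-/

lemma exists_ne_zero_norm_div_le_one {K : Type*} [NormedField K] {x y z : K}
    (h : (x, y, z) ≠ 0) :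
    ∃ t ≠ 0, (t = x ∨ t = y ∨ t = z) ∧ ‖x / t‖ ≤ 1 ∧ ‖y / t‖ ≤ 1 ∧ ‖z / t‖ ≤ 1 := by
  obtain ⟨i, hi⟩ := Finite.exists_max fun i => ‖![x, y, z] i‖
  have hx := hi 0
  have hy := hi 1
  have hz := hi 2
  have ht : ![x, y, z] i ≠ 0 := by
    intro hzero
    simp only [hzero, norm_zero, norm_le_zero_iff] at hx hy hz
    exact h (by simpa using ⟨hx, hy, hz⟩)
  refine ⟨_, ht, ?_, ?_⟩
  · fin_cases i <;> simp
  · simp only [norm_div, div_le_one (norm_pos_iff.mpr ht)]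
    exact ⟨hx, hy, hz⟩

namespace PadicInt

variable {p : ℕ} [Fact p.Prime]

lemma exists_isUnit_of_diagonal_eq_zero (a b c : ℤ_[p]) {x y z : ℚ_[p]}
    (hxyz : (x, y, z) ≠ 0) (h : a * x ^ 2 + b * y ^ 2 + c * z ^ 2 = 0) :
    ∃ X Y Z : ℤ_[p], (IsUnit X ∨ IsUnit Y ∨ IsUnit Z) ∧ a * X ^ 2 + b * Y ^ 2 + c * Z ^ 2 = 0 := by
  obtain ⟨t, ht, hmax, hx, hy, hz⟩ := exists_ne_zero_norm_div_le_one hxyz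
  obtain ⟨X, hX⟩ : ∃ X : ℤ_[p], (X : ℚ_[p]) = x / t := ⟨⟨x / t, hx⟩, rfl⟩
  obtain ⟨Y, hY⟩ : ∃ Y : ℤ_[p], (Y : ℚ_[p]) = y / t := ⟨⟨y / t, hy⟩, rfl⟩
  obtain ⟨Z, hZ⟩ : ∃ Z : ℤ_[p], (Z : ℚ_[p]) = z / t := ⟨⟨z / t, hz⟩, rfl⟩
  refine ⟨X, Y, Z, ?_, ?_⟩
  · simp only [isUnit_iff, norm_def, hX, hY, hZ]
    rcases hmax with rfl | rfl | rfl <;> simp [div_self ht]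
  · have hQ : (a * X ^ 2 + b * Y ^ 2 + c * Z ^ 2 : ℚ_[p]) = 0 := by
      rw [hX, hY, hZ]
      field_simp
      linear_combination h
    exact coe_eq_zero.mp (by push_cast; exact hQ)

lemma toZModPow_intCast_of_emod_eq {k : ℕ} {n r : ℤ} (h : n % (p ^ k : ℕ) = r) :
    toZModPow k (n : ℤ_[p]) = r := by
  rw [map_intCast, ← h, ZMod.intCast_mod]

lemma diagonal_ne_zero_of_isUnit (a b c : ℤ_[2]) (ha : toZModPow 3 a = 1) (hb : toZModPow 3 b = 1)
    (hc : toZModPow 3 c = 2) {X Y Z : ℤ_[2]} (hunit : IsUnit X ∨ IsUnit Y ∨ IsUnit Z) :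
    a * X ^ 2 + b * Y ^ 2 + c * Z ^ 2 ≠ 0 := by
  intro h
  have hmod := congrArg (toZModPow 3) h
  simp only [map_add, map_mul, map_pow, map_zero, ha, hb, hc, one_mul] at hmod
  have key : ∀ u v w : ZMod (2 ^ 3), IsUnit u ∨ IsUnit v ∨ IsUnit w →
      u ^ 2 + v ^ 2 + 2 * w ^ 2 ≠ 0 := by decide
  exact key _ _ _ (by rcases hunit with hu | hu | hu <;> simp [hu.map]) hmod

end PadicInt

theorem stmt_13_general (a b c c' : ℤ) (hceq : c = 2 * c')
    (hc4 : c' % 4 = 1) (ha8 : a % 8 = 1) (hb8 : b % 8 = 1) :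
    ¬ ∃ x y z : ℚ_[2], (x, y, z) ≠ (0, 0, 0) ∧
      (a : ℚ_[2]) * x ^ 2 + (b : ℚ_[2]) * y ^ 2 + (c : ℚ_[2]) * z ^ 2 = 0 := by
  rintro ⟨x, y, z, hxyz, h⟩
  obtain ⟨X, Y, Z, hunit, hXYZ⟩ :=
    PadicInt.exists_isUnit_of_diagonal_eq_zero a b c hxyz (by push_cast; exact h)
  have hc8 : c % 8 = 2 := by omega
  refine PadicInt.diagonal_ne_zero_of_isUnit a b c ?_ ?_ ?_ hunit hXYZ
  · exact_mod_cast PadicInt.toZModPow_intCast_of_emod_eq (p := 2) (k := 3) ha8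
  · exact_mod_cast PadicInt.toZModPow_intCast_of_emod_eq (p := 2) (k := 3) hb8
  · exact_mod_cast PadicInt.toZModPow_intCast_of_emod_eq (p := 2) (k := 3) hc8

theorem stmt_13 (a b c c' : ℤ) (ha : a ≠ 0) (hb : b ≠ 0) (hc : c ≠ 0)
    (hoa : Odd a) (hob : Odd b) (hceq : c = 2 * c')
    (hsa : Squarefree a) (hsb : Squarefree b) (hsc : Squarefree c)
    (hab : IsCoprime a b) (hbc : IsCoprime b c) (hca : IsCoprime c a)
    (hc4 : c' % 4 = 1) (ha8 : a % 8 = 1) (hb8 : b % 8 = 1) :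
    ¬ ∃ x y z : ℚ_[2], (x, y, z) ≠ (0, 0, 0) ∧
      (a : ℚ_[2]) * x ^ 2 + (b : ℚ_[2]) * y ^ 2 + (c : ℚ_[2]) * z ^ 2 = 0 :=
  stmt_13_general a b c c' hceq hc4 ha8 hb8
end

section
/- Let a, b, c be nonzero squarefree pairwise coprime integers and p an odd prime not dividing abc. Then ax² + by² + cz² = 0 has a nonzero solution over ℚ_p. -/
/-!
Modulo `p` the equation `a x² + b y² + c = 0` is solvable by counting: `a x²` and `-(b y² + c)`
each take `(p + 1) / 2` values in `𝔽_p`. Since `c ≢ 0`, one of the two coordinates of such a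
solution is nonzero; fixing the other at an integral lift leaves `A x² + D = 0`, whose root mod `p`
is simple because `2 A x₀` is a unit for odd `p`. Hensel's lemma lifts it to `ℤ_p`, and `z = 1`.
-/

open Polynomial in
theorem FiniteField.exists_mul_sq_add_mul_sq_add_eq_zero {K : Type*} [Field K] [Fintype K]
    (hK : Fintype.card K % 2 = 1) {a b : K} (ha : a ≠ 0) (hb : b ≠ 0) (c : K) :
    ∃ x y : K, a * x ^ 2 + b * y ^ 2 + c = 0 := by
  obtain ⟨x, y, h⟩ := exists_root_sum_quadratic (f := C a * X ^ 2 + C 0 * X + C 0)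
    (g := C b * X ^ 2 + C 0 * X + C c) (degree_quadratic ha) (degree_quadratic hb) hK
  exact ⟨x, y, by simpa [add_assoc] using h⟩

namespace PadicInt

variable {p : ℕ} [Fact p.Prime]

theorem norm_lt_one_iff_toZMod_eq_zero (x : ℤ_[p]) : ‖x‖ < 1 ↔ toZMod x = 0 := by
  rw [← RingHom.mem_ker, ker_toZMod, IsLocalRing.mem_maximalIdeal, mem_nonunits]

theorem norm_eq_one_iff_toZMod_ne_zero (x : ℤ_[p]) : ‖x‖ = 1 ↔ toZMod x ≠ 0 := by
  rw [ne_eq, ← norm_lt_one_iff_toZMod_eq_zero, not_lt]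
  exact ⟨ge_of_eq, (norm_le_one x).antisymm⟩

open Polynomial in
theorem exists_mul_sq_add_eq_zero (hp : p ≠ 2) {A D : ℤ_[p]} {x₀ : ZMod p}
    (hA : toZMod A ≠ 0) (hx₀ : x₀ ≠ 0) (h : toZMod A * x₀ ^ 2 + toZMod D = 0) :
    ∃ x : ℤ_[p], A * x ^ 2 + D = 0 := by
  obtain ⟨a, rfl⟩ := ZMod.ringHom_surjective (toZMod : ℤ_[p] →+* ZMod p) x₀
  set F : ℤ_[p][X] := C A * X ^ 2 + C D
  have hFa : ‖F.aeval a‖ < 1 := by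
    rw [norm_lt_one_iff_toZMod_eq_zero]
    simpa [F] using h
  have hF'a : ‖F.derivative.aeval a‖ = 1 := by
    have h2 : (2 : ZMod p) ≠ 0 := Ring.two_ne_zero (by rwa [ZMod.ringChar_zmod_n])
    rw [norm_eq_one_iff_toZMod_ne_zero]
    simp [F, one_add_one_eq_two, map_ofNat, h2, hA, hx₀]
  obtain ⟨x, hx, -⟩ := hensels_lemma (F := F) (a := a) (by rw [hF'a]; simpa using hFa)
  exact ⟨x, by simpa [F] using hx⟩

theorem exists_mul_sq_add_mul_sq_add_eq_zero (hp : p ≠ 2) {A B D : ℤ_[p]} {x₀ y₀ : ZMod p}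
    (hA : toZMod A ≠ 0) (hx₀ : x₀ ≠ 0)
    (h : toZMod A * x₀ ^ 2 + toZMod B * y₀ ^ 2 + toZMod D = 0) :
    ∃ x y : ℤ_[p], A * x ^ 2 + B * y ^ 2 + D = 0 := by
  obtain ⟨y, rfl⟩ := ZMod.ringHom_surjective (toZMod : ℤ_[p] →+* ZMod p) y₀
  obtain ⟨x, hx⟩ := exists_mul_sq_add_eq_zero hp (D := B * y ^ 2 + D) hA hx₀
    (by simpa [add_assoc] using h)
  exact ⟨x, y, by linear_combination hx⟩

end PadicInt

theorem stmt_14_general (a b c : ℤ) (p : ℕ) [Fact p.Prime] (hodd : p ≠ 2)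
    (hnd : ¬ (p : ℤ) ∣ a * b * c) :
    ∃ x y z : ℚ_[p], (x, y, z) ≠ (0, 0, 0) ∧
      (a : ℚ_[p]) * x ^ 2 + (b : ℚ_[p]) * y ^ 2 + (c : ℚ_[p]) * z ^ 2 = 0 := by
  have habc : (a : ZMod p) * b * c ≠ 0 := by
    exact_mod_cast mt (ZMod.intCast_zmod_eq_zero_iff_dvd _ p).mp hnd
  simp only [mul_ne_zero_iff] at habc
  obtain ⟨⟨ha, hb⟩, hc⟩ := habc
  have hcard : Fintype.card (ZMod p) % 2 = 1 := by
    rw [ZMod.card, ← Nat.odd_iff]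
    exact (Fact.out : p.Prime).odd_of_ne_two hodd
  obtain ⟨x₀, y₀, h⟩ := FiniteField.exists_mul_sq_add_mul_sq_add_eq_zero hcard ha hb (c : ZMod p)
  obtain ⟨x, y, hxy⟩ : ∃ x y : ℤ_[p], (a : ℤ_[p]) * x ^ 2 + b * y ^ 2 + c = 0 := by
    rcases eq_or_ne x₀ 0 with rfl | hx₀
    · have hy₀ : y₀ ≠ 0 := by
        rintro rfl
        exact hc (by simpa using h)
      obtain ⟨y, x, h'⟩ := PadicInt.exists_mul_sq_add_mul_sq_add_eq_zero hodd
        (A := b) (B := a) (D := c) (y₀ := 0) (by simpa) hy₀ (by simpa using h)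
      exact ⟨x, y, by linear_combination h'⟩
    · exact PadicInt.exists_mul_sq_add_mul_sq_add_eq_zero hodd (by simpa) hx₀ (by simpa using h)
  refine ⟨x, y, 1, by simp, ?_⟩
  simpa using congrArg ((↑) : ℤ_[p] → ℚ_[p]) hxy

theorem stmt_14 (a b c : ℤ) (p : ℕ) [Fact p.Prime] (hodd : p ≠ 2)
    (ha : a ≠ 0) (hb : b ≠ 0) (hc : c ≠ 0)
    (hsa : Squarefree a) (hsb : Squarefree b) (hsc : Squarefree c)
    (hab : IsCoprime a b) (hbc : IsCoprime b c) (hca : IsCoprime c a)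
    (hnd : ¬ (p : ℤ) ∣ a * b * c) :
    ∃ x y z : ℚ_[p], (x, y, z) ≠ (0, 0, 0) ∧
      (a : ℚ_[p]) * x ^ 2 + (b : ℚ_[p]) * y ^ 2 + (c : ℚ_[p]) * z ^ 2 = 0 :=
  stmt_14_general a b c p hodd hnd
end

section
/- Let a, b, c be nonzero integers and p a prime dividing gcd(a, b) with a, b, c squarefree. Then ax² + by² + cz² = 0 has a nonzero integer solution if and only if (a/p)x² + (b/p)y² + (cp)z² = 0 has a nonzero integer solution. -/
theorem stmt_15 (a b c : ℤ) (p : ℤ) (hp : Prime p) (ha : a ≠ 0) (hb : b ≠ 0) (hc : c ≠ 0)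
    (hsa : Squarefree a) (hsb : Squarefree b) (hsc : Squarefree c)
    (hpa : p ∣ a) (hpb : p ∣ b) :
    (∃ x y z : ℤ, (x, y, z) ≠ (0, 0, 0) ∧ a * x ^ 2 + b * y ^ 2 + c * z ^ 2 = 0) ↔
      (∃ x y z : ℤ, (x, y, z) ≠ (0, 0, 0) ∧
        (a / p) * x ^ 2 + (b / p) * y ^ 2 + (c * p) * z ^ 2 = 0) := by
  have hp0 : p ≠ 0 := hp.ne_zero
  obtain ⟨a', rfl⟩ := hpa
  obtain ⟨b', rfl⟩ := hpb
  rw [Int.mul_ediv_cancel_left _ hp0, Int.mul_ediv_cancel_left _ hp0]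
  constructor
  · rintro ⟨x, y, z, hne, heq⟩
    refine ⟨p * x, p * y, z, ?_, by linear_combination p * heq⟩
    simp only [ne_eq, Prod.mk.injEq, mul_eq_zero, hp0, false_or, not_and] at hne ⊢
    exact hne
  · rintro ⟨x, y, z, hne, heq⟩
    refine ⟨x, y, p * z, ?_, by linear_combination p * heq⟩
    simp only [ne_eq, Prod.mk.injEq, mul_eq_zero, hp0, false_or, not_and] at hne ⊢
    exact hne
end

section
/- Let a, b, c be nonzero squarefree pairwise coprime integers satisfying: (A) not all the same sign, and (B) -bc, -ca, -ab quadratic residues mod a, b, c respectively. If ax² + by² + cz² = 0 has a nonzero solution over ℝ and over every ℚ_p, then it has a nonzero rational solution (Hasse–Minkowski for this ternary diagonal form). -/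
/-!
Legendre's argument. Condition (B) makes `a x² + b y² + c z²` split into two linear factors
modulo each of `a`, `b`, `c`; pigeonhole in a box of sides `√|bc|`, `√|ca|`, `√|ab|` gives a
nonzero integer point at which one factor vanishes modulo each, so `abc` divides the form there.
After rotating and negating to reach `a, b > 0 > c`, the size of the box pins the value of the
form down to `k · abc` with `-2 ≤ k ≤ 1`, and each value of `k` yields a nontrivial zero.
-/

theorem Nat.mul_mul_lt_succ_sqrt_mul (p q r : ℕ) :
    p * q * r < (sqrt (q * r) + 1) * (sqrt (r * p) + 1) * (sqrt (p * q) + 1) := by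
  refine lt_of_pow_lt_pow_left₀ 2 (zero_le _) ?_
  calc (p * q * r) ^ 2 = q * r * (r * p) * (p * q) := by ring
    _ < (sqrt (q * r) + 1) ^ 2 * (sqrt (r * p) + 1) ^ 2 * (sqrt (p * q) + 1) ^ 2 :=
      Nat.mul_lt_mul'' (Nat.mul_lt_mul'' (lt_succ_sqrt' _) (lt_succ_sqrt' _)) (lt_succ_sqrt' _)
    _ = _ := by ring

theorem Int.sq_le_of_abs_le_sqrt {x : ℤ} {n : ℕ} (h : |x| ≤ n.sqrt) : x ^ 2 ≤ n :=
  calc x ^ 2 = |x| ^ 2 := (sq_abs x).symm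
    _ ≤ (n.sqrt : ℤ) ^ 2 := pow_le_pow_left₀ (abs_nonneg x) h 2
    _ ≤ n := by exact_mod_cast Nat.sqrt_le' n

theorem AddMonoidHom.exists_ne_zero_map_eq_zero_of_card_lt {G : Type*} [AddCommGroup G]
    [Fintype G] (L : ℤ × ℤ × ℤ →+ G) {m₁ m₂ m₃ : ℕ}
    (hcard : Fintype.card G < (m₁ + 1) * (m₂ + 1) * (m₃ + 1)) :
    ∃ v : ℤ × ℤ × ℤ, v ≠ 0 ∧ L v = 0 ∧ |v.1| ≤ m₁ ∧ |v.2.1| ≤ m₂ ∧ |v.2.2| ≤ m₃ := by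
  classical
  set box := Finset.Icc (0 : ℤ) m₁ ×ˢ Finset.Icc (0 : ℤ) m₂ ×ˢ Finset.Icc (0 : ℤ) m₃
  have hbox : (Finset.univ : Finset G).card < box.card := by
    simpa [box, Finset.card_product, mul_assoc] using hcard
  obtain ⟨p, hp, q, hq, hpq, hLpq⟩ :=
    Finset.exists_ne_map_eq_of_card_lt_of_maps_to hbox (f := L) fun _ _ => Finset.mem_univ _
  simp only [box, Finset.mem_product, Finset.mem_Icc] at hp hq
  refine ⟨p - q, sub_ne_zero.2 hpq, by rw [map_sub, hLpq, sub_self], ?_, ?_, ?_⟩ <;>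
    simp only [Prod.fst_sub, Prod.snd_sub, abs_sub_le_iff] <;> omega

def linearFormMod (n : ℕ) (p q r : ℤ) : ℤ × ℤ × ℤ →+ ZMod n where
  toFun v := ((p * v.1 + q * v.2.1 + r * v.2.2 : ℤ) : ZMod n)
  map_zero' := by simp
  map_add' v w := by simp only [Prod.fst_add, Prod.snd_add]; push_cast; ring

theorem linearFormMod_eq_zero_iff {n : ℕ} {p q r : ℤ} {v : ℤ × ℤ × ℤ} :
    linearFormMod n p q r v = 0 ↔ (n : ℤ) ∣ p * v.1 + q * v.2.1 + r * v.2.2 :=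
  ZMod.intCast_zmod_eq_zero_iff_dvd _ _

theorem dvd_diagonal_form_of_dvd_sub {R : Type*} [CommRing R] {a b c d x y z : R}
    (hab : IsCoprime a b) (hd : a ∣ d ^ 2 + b * c) (h : a ∣ b * y - d * z) :
    a ∣ a * x ^ 2 + b * y ^ 2 + c * z ^ 2 := by
  refine hab.dvd_of_dvd_mul_left ?_
  have key : b * (a * x ^ 2 + b * y ^ 2 + c * z ^ 2) =
      a * (b * x ^ 2) + (b * y - d * z) * (b * y + d * z) + (d ^ 2 + b * c) * z ^ 2 := by ring
  rw [key]
  exact dvd_add (dvd_add (dvd_mul_right a _) (h.mul_right _)) (hd.mul_right _)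

def DiagonalIsotropic (a b c : ℤ) : Prop :=
  ∃ x y z : ℤ, (x, y, z) ≠ 0 ∧ a * x ^ 2 + b * y ^ 2 + c * z ^ 2 = 0

namespace DiagonalIsotropic

variable {a b c : ℤ}

theorem rotate (h : DiagonalIsotropic a b c) : DiagonalIsotropic b c a := by
  obtain ⟨x, y, z, hne, heq⟩ := h
  refine ⟨y, z, x, ?_, by linear_combination heq⟩
  simp only [ne_eq, Prod.mk_eq_zero] at hne ⊢
  tauto

theorem of_neg (h : DiagonalIsotropic (-a) (-b) (-c)) : DiagonalIsotropic a b c := by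
  obtain ⟨x, y, z, hne, heq⟩ := h
  exact ⟨x, y, z, hne, by linear_combination -heq⟩

/-- The witness comes from `a (xz + by)² + b (yz - ax)² + c (z² + ab)² =
(z² + ab) (a x² + b y² + c z² + abc)`. -/
theorem of_eq_neg_mul_mul {x y z : ℤ} (hab : 0 < a * b)
    (h : a * x ^ 2 + b * y ^ 2 + c * z ^ 2 = -(a * b * c)) : DiagonalIsotropic a b c := by
  refine ⟨x * z + b * y, y * z - a * x, z ^ 2 + a * b, ?_,
    by linear_combination (z ^ 2 + a * b) * h⟩
  simp only [ne_eq, Prod.mk_eq_zero, not_and]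
  intro _ _
  positivity

theorem one_one_of_dvd {f : ℤ} (hc : c < 0) (hf : c ∣ f ^ 2 + 1) : DiagonalIsotropic 1 1 c := by
  have hsq : IsSquare (-1 : ZMod c.natAbs) := by
    have hf' := (ZMod.intCast_zmod_eq_zero_iff_dvd _ c.natAbs).2 (Int.natAbs_dvd.2 hf)
    push_cast at hf'
    exact ⟨f, by linear_combination -hf'⟩
  obtain ⟨X, Y, hXY⟩ := Nat.eq_sq_add_sq_of_isSquare_mod_neg_one hsq
  have hXY' : (X : ℤ) ^ 2 + (Y : ℤ) ^ 2 = -c := by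
    rw [← Int.ofNat_natAbs_of_nonpos hc.le]; exact_mod_cast hXY.symm
  exact ⟨X, Y, 1, by simp, by linear_combination hXY'⟩

end DiagonalIsotropic

structure LegendreConditions (a b c : ℤ) : Prop where
  squarefree_a : Squarefree a
  squarefree_b : Squarefree b
  squarefree_c : Squarefree c
  coprime_ab : IsCoprime a b
  coprime_bc : IsCoprime b c
  coprime_ca : IsCoprime c a
  dvd_a : ∃ d, a ∣ d ^ 2 + b * c
  dvd_b : ∃ e, b ∣ e ^ 2 + c * a
  dvd_c : ∃ f, c ∣ f ^ 2 + a * b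

namespace LegendreConditions

variable {a b c : ℤ}

theorem rotate (h : LegendreConditions a b c) : LegendreConditions b c a :=
  ⟨h.2, h.3, h.1, h.5, h.6, h.4, h.8, h.9, h.7⟩

theorem neg (h : LegendreConditions a b c) : LegendreConditions (-a) (-b) (-c) where
  squarefree_a := h.squarefree_a.squarefree_of_dvd (neg_dvd.2 dvd_rfl)
  squarefree_b := h.squarefree_b.squarefree_of_dvd (neg_dvd.2 dvd_rfl)
  squarefree_c := h.squarefree_c.squarefree_of_dvd (neg_dvd.2 dvd_rfl)
  coprime_ab := h.coprime_ab.neg_neg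
  coprime_bc := h.coprime_bc.neg_neg
  coprime_ca := h.coprime_ca.neg_neg
  dvd_a := h.dvd_a.imp fun _ hd => by rwa [neg_dvd, neg_mul_neg]
  dvd_b := h.dvd_b.imp fun _ he => by rwa [neg_dvd, neg_mul_neg]
  dvd_c := h.dvd_c.imp fun _ hf => by rwa [neg_dvd, neg_mul_neg]

theorem exists_small_dvd (h : LegendreConditions a b c) :
    ∃ x y z : ℤ, (x, y, z) ≠ 0 ∧ a * b * c ∣ a * x ^ 2 + b * y ^ 2 + c * z ^ 2 ∧
      x ^ 2 ≤ |b * c| ∧ y ^ 2 ≤ |c * a| ∧ z ^ 2 ≤ |a * b| := by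
  obtain ⟨d, hd⟩ := h.dvd_a
  obtain ⟨e, he⟩ := h.dvd_b
  obtain ⟨f, hf⟩ := h.dvd_c
  have : NeZero a.natAbs := ⟨Int.natAbs_ne_zero.2 h.squarefree_a.ne_zero⟩
  have : NeZero b.natAbs := ⟨Int.natAbs_ne_zero.2 h.squarefree_b.ne_zero⟩
  have : NeZero c.natAbs := ⟨Int.natAbs_ne_zero.2 h.squarefree_c.ne_zero⟩
  let L := (linearFormMod a.natAbs 0 b (-d)).prod
    ((linearFormMod b.natAbs (-e) 0 c).prod (linearFormMod c.natAbs a (-f) 0))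
  obtain ⟨⟨x, y, z⟩, hne, hL, hx, hy, hz⟩ := L.exists_ne_zero_map_eq_zero_of_card_lt
    (by simpa [ZMod.card, mul_assoc] using
      Nat.mul_mul_lt_succ_sqrt_mul a.natAbs b.natAbs c.natAbs)
  simp only [L, AddMonoidHom.prod_apply, Prod.mk_eq_zero, linearFormMod_eq_zero_iff,
    Int.natAbs_dvd] at hL
  obtain ⟨hLa, hLb, hLc⟩ := hL
  have hQa : a ∣ a * x ^ 2 + b * y ^ 2 + c * z ^ 2 :=
    dvd_diagonal_form_of_dvd_sub h.coprime_ab hd (by simpa [sub_eq_add_neg] using hLa)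
  have hQb : b ∣ a * x ^ 2 + b * y ^ 2 + c * z ^ 2 := by
    have := dvd_diagonal_form_of_dvd_sub (x := y) h.coprime_bc he
      (by simpa [sub_eq_add_neg, add_comm] using hLb)
    rwa [show b * y ^ 2 + c * z ^ 2 + a * x ^ 2 = a * x ^ 2 + b * y ^ 2 + c * z ^ 2 by ring] at this
  have hQc : c ∣ a * x ^ 2 + b * y ^ 2 + c * z ^ 2 := by
    have := dvd_diagonal_form_of_dvd_sub (x := z) h.coprime_ca hf
      (by simpa [sub_eq_add_neg] using hLc)
    rwa [show c * z ^ 2 + a * x ^ 2 + b * y ^ 2 = a * x ^ 2 + b * y ^ 2 + c * z ^ 2 by ring] at this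
  have bound {t p q : ℤ} (ht : |t| ≤ (p.natAbs * q.natAbs).sqrt) : t ^ 2 ≤ |p * q| := by
    simpa [abs_mul] using Int.sq_le_of_abs_le_sqrt ht
  exact ⟨x, y, z, hne,
    (h.coprime_ca.symm.mul_left h.coprime_bc).mul_dvd (h.coprime_ab.mul_dvd hQa hQb) hQc,
    bound hx, bound hy, bound hz⟩

theorem isotropic_of_small_dvd (h : LegendreConditions a b c) (ha : 0 < a) (hb : 0 < b)
    (hc : c < 0) {x y z : ℤ} (hne : (x, y, z) ≠ 0)
    (hdvd : a * b * c ∣ a * x ^ 2 + b * y ^ 2 + c * z ^ 2)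
    (hx : x ^ 2 ≤ |b * c|) (hy : y ^ 2 ≤ |c * a|) (hz : z ^ 2 ≤ |a * b|) :
    DiagonalIsotropic a b c := by
  rw [abs_of_neg (mul_neg_of_pos_of_neg hb hc)] at hx
  rw [abs_of_neg (mul_neg_of_neg_of_pos hc ha)] at hy
  rw [abs_of_pos (mul_pos ha hb)] at hz
  have hN : a * b * c < 0 := mul_neg_of_pos_of_neg (mul_pos ha hb) hc
  have hax : 0 ≤ a * x ^ 2 ∧ a * x ^ 2 ≤ -(a * b * c) := ⟨by positivity, by nlinarith⟩
  have hby : 0 ≤ b * y ^ 2 ∧ b * y ^ 2 ≤ -(a * b * c) := ⟨by positivity, by nlinarith⟩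
  have hcz : a * b * c ≤ c * z ^ 2 ∧ c * z ^ 2 ≤ 0 := ⟨by nlinarith, by nlinarith⟩
  obtain ⟨k, hk⟩ := hdvd
  have hk₁ : -2 ≤ k := by nlinarith
  have hk₂ : k ≤ 1 := by nlinarith
  interval_cases k
  · have hx' : x ^ 2 = -(b * c) := by nlinarith
    exact ⟨0, x, b, by simp [hb.ne'], by linear_combination b * hx'⟩
  · exact DiagonalIsotropic.of_eq_neg_mul_mul (x := x) (y := y) (z := z) (mul_pos ha hb)
      (by linarith)
  · exact ⟨x, y, z, hne, by linarith⟩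
  · have hz' : z ^ 2 = a * b := by nlinarith
    have hab : a * b = 1 := by
      have hsq : Squarefree (a * b) :=
        squarefree_mul_iff.2 ⟨h.coprime_ab.isRelPrime, h.squarefree_a, h.squarefree_b⟩
      rw [← hz', Int.isUnit_sq (hsq z (by rw [← hz', sq]))]
    obtain rfl : a = 1 := Int.eq_one_of_mul_eq_one_right ha.le hab
    obtain rfl : b = 1 := by simpa using hab
    obtain ⟨f, hf⟩ := h.dvd_c
    exact DiagonalIsotropic.one_one_of_dvd hc (by simpa using hf)

theorem isotropic_of_pos_of_pos_of_neg (h : LegendreConditions a b c) (ha : 0 < a) (hb : 0 < b)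
    (hc : c < 0) : DiagonalIsotropic a b c := by
  obtain ⟨x, y, z, hne, hdvd, hx, hy, hz⟩ := h.exists_small_dvd
  exact h.isotropic_of_small_dvd ha hb hc hne hdvd hx hy hz

theorem isotropic_of_signs (h : LegendreConditions a b c)
    (hsign : (0 < a ∧ 0 < b ∧ c < 0) ∨ (a < 0 ∧ b < 0 ∧ 0 < c)) :
    DiagonalIsotropic a b c := by
  rcases hsign with ⟨ha, hb, hc⟩ | ⟨ha, hb, hc⟩
  · exact h.isotropic_of_pos_of_pos_of_neg ha hb hc
  · exact (h.neg.isotropic_of_pos_of_pos_of_neg (neg_pos.2 ha) (neg_pos.2 hb)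
      (neg_lt_zero.2 hc)).of_neg

theorem isotropic (h : LegendreConditions a b c)
    (hA : ¬ ((0 < a ∧ 0 < b ∧ 0 < c) ∨ (a < 0 ∧ b < 0 ∧ c < 0))) :
    DiagonalIsotropic a b c := by
  -- rotate the coefficient whose sign differs from the other two into the last position
  have hbca := h.rotate
  have hcab := hbca.rotate
  rcases h.squarefree_a.ne_zero.lt_or_gt with ha | ha <;>
    rcases h.squarefree_b.ne_zero.lt_or_gt with hb | hb <;>
    rcases h.squarefree_c.ne_zero.lt_or_gt with hc | hc
  · exact absurd (Or.inr ⟨ha, hb, hc⟩) hA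
  · exact h.isotropic_of_signs (Or.inr ⟨ha, hb, hc⟩)
  · exact (hcab.isotropic_of_signs (Or.inr ⟨hc, ha, hb⟩)).rotate
  · exact (hbca.isotropic_of_signs (Or.inl ⟨hb, hc, ha⟩)).rotate.rotate
  · exact (hbca.isotropic_of_signs (Or.inr ⟨hb, hc, ha⟩)).rotate.rotate
  · exact (hcab.isotropic_of_signs (Or.inl ⟨hc, ha, hb⟩)).rotate
  · exact h.isotropic_of_signs (Or.inl ⟨ha, hb, hc⟩)
  · exact absurd (Or.inl ⟨ha, hb, hc⟩) hA

end LegendreConditions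

theorem stmt_19_general (a b c : ℤ)
    (hsa : Squarefree a) (hsb : Squarefree b) (hsc : Squarefree c)
    (hab : IsCoprime a b) (hbc : IsCoprime b c) (hca : IsCoprime c a)
    (hA : ¬ ((0 < a ∧ 0 < b ∧ 0 < c) ∨ (a < 0 ∧ b < 0 ∧ c < 0)))
    (hB1 : ∃ d : ℤ, d ^ 2 ≡ -(b * c) [ZMOD a])
    (hB2 : ∃ e : ℤ, e ^ 2 ≡ -(c * a) [ZMOD b])
    (hB3 : ∃ f : ℤ, f ^ 2 ≡ -(a * b) [ZMOD c]) :
    ∃ x y z : ℚ, (x, y, z) ≠ (0, 0, 0) ∧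
      (a : ℚ) * x ^ 2 + (b : ℚ) * y ^ 2 + (c : ℚ) * z ^ 2 = 0 := by
  have hdvd {m n : ℤ} : (∃ d : ℤ, d ^ 2 ≡ -n [ZMOD m]) → ∃ d : ℤ, m ∣ d ^ 2 + n :=
    Exists.imp fun _ hd => by simpa using hd.symm.dvd
  obtain ⟨x, y, z, hne, heq⟩ :=
    (LegendreConditions.mk hsa hsb hsc hab hbc hca (hdvd hB1) (hdvd hB2) (hdvd hB3)).isotropic hA
  refine ⟨x, y, z, ?_, by exact_mod_cast heq⟩
  simpa [Prod.ext_iff] using hne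

theorem stmt_19 (a b c : ℤ) (ha : a ≠ 0) (hb : b ≠ 0) (hc : c ≠ 0)
    (hsa : Squarefree a) (hsb : Squarefree b) (hsc : Squarefree c)
    (hab : IsCoprime a b) (hbc : IsCoprime b c) (hca : IsCoprime c a)
    (hA : ¬ ((0 < a ∧ 0 < b ∧ 0 < c) ∨ (a < 0 ∧ b < 0 ∧ c < 0)))
    (hB1 : ∃ d : ℤ, d ^ 2 ≡ -(b * c) [ZMOD a])
    (hB2 : ∃ e : ℤ, e ^ 2 ≡ -(c * a) [ZMOD b])
    (hB3 : ∃ f : ℤ, f ^ 2 ≡ -(a * b) [ZMOD c])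
    (hR : ∃ x y z : ℝ, (x, y, z) ≠ (0, 0, 0) ∧
      (a : ℝ) * x ^ 2 + (b : ℝ) * y ^ 2 + (c : ℝ) * z ^ 2 = 0)
    (hQp : ∀ (p : ℕ) [Fact p.Prime], ∃ x y z : ℚ_[p], (x, y, z) ≠ (0, 0, 0) ∧
      (a : ℚ_[p]) * x ^ 2 + (b : ℚ_[p]) * y ^ 2 + (c : ℚ_[p]) * z ^ 2 = 0) :
    ∃ x y z : ℚ, (x, y, z) ≠ (0, 0, 0) ∧
      (a : ℚ) * x ^ 2 + (b : ℚ) * y ^ 2 + (c : ℚ) * z ^ 2 = 0 :=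
  stmt_19_general a b c hsa hsb hsc hab hbc hca hA hB1 hB2 hB3
end
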